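/- arXiv:1907.07869 — 14 statements merged into one kernel-verified Lean document; each statement's English description precedes it below -/
import Mathlib

section
/- If y satisfies a ≤ y ≤ b for real numbers a ≤ b, then y^4 ≤ (3/4·(a+b)^2 − ab)·y^2 + ((a+b)^3/4 − (a+b)·ab)·y − (a+b)^2/4·ab. -/
theorem stmt_0 (a b y : ℝ) (h1 : a ≤ y) (h2 : y ≤ b) :
    y ^ 4 ≤ (3 / 4 * (a + b) ^ 2 - a * b) * y ^ 2
      + ((a + b) ^ 3 / 4 - (a + b) * (a * b)) * y - (a + b) ^ 2 / 4 * (a * b) := by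
  have factorization :
      (3 / 4 * (a + b) ^ 2 - a * b) * y ^ 2 + ((a + b) ^ 3 / 4 - (a + b) * (a * b)) * y
        - (a + b) ^ 2 / 4 * (a * b) - y ^ 4 = (y - a) * (b - y) * (y + (a + b) / 2) ^ 2 := by
    ring
  have factors_nonneg : 0 ≤ (y - a) * (b - y) * (y + (a + b) / 2) ^ 2 :=
    mul_nonneg (mul_nonneg (sub_nonneg.2 h1) (sub_nonneg.2 h2)) (sq_nonneg _)
  linarith
end

section
/- Let X be a finite discrete random variable taking values x_1,...,x_n in [m,M] with probabilities p_1,...,p_n (p_i ≥ 0, ∑p_i = 1). Let μ₁' = ∑ p_i x_i, μ₂ = ∑ p_i (x_i−μ₁')², μ₄ = ∑ p_i (x_i−μ₁')⁴. Then μ₄ ≤ α·μ₂ + β where α = (3/4)(M−m)² − 2(μ₁'−m)(M−μ₁') and β = (μ₁'−m)(M−μ₁')·((1/4)(M−m)² − (μ₁'−m)(M−μ₁')). -/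
/-!
With `t = x - μ₁'` and `γ = (M + m - 2μ₁')(M - m)² / 4`, the quartic `α t² + γ t + β - t⁴`
factors as `(x - m)(M - x)(x - 2μ₁' + (M + m)/2)²`, hence is nonnegative on `[m, M]`.
Averaging against `p` gives the bound, since the first central moment vanishes.
-/

open Finset

theorem sub_pow_four_le_of_mem_Icc {m M y : ℝ} (hy : y ∈ Set.Icc m M) (c : ℝ) :
    (y - c) ^ 4 ≤ (3 / 4 * (M - m) ^ 2 - 2 * (c - m) * (M - c)) * (y - c) ^ 2
      + (M + m - 2 * c) * (M - m) ^ 2 / 4 * (y - c)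
      + (c - m) * (M - c) * (1 / 4 * (M - m) ^ 2 - (c - m) * (M - c)) := by
  have hfactor : (3 / 4 * (M - m) ^ 2 - 2 * (c - m) * (M - c)) * (y - c) ^ 2
      + (M + m - 2 * c) * (M - m) ^ 2 / 4 * (y - c)
      + (c - m) * (M - c) * (1 / 4 * (M - m) ^ 2 - (c - m) * (M - c)) - (y - c) ^ 4
      = (y - m) * (M - y) * (y - 2 * c + (M + m) / 2) ^ 2 := by
    ring
  refine sub_nonneg.1 (hfactor ▸ mul_nonneg (mul_nonneg ?_ ?_) (sq_nonneg _))
  · exact sub_nonneg.2 hy.1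
  · exact sub_nonneg.2 hy.2

theorem sum_mul_sub_weighted_mean {ι : Type*} (s : Finset ι) (p x : ι → ℝ)
    (hps : ∑ i ∈ s, p i = 1) :
    ∑ i ∈ s, p i * (x i - ∑ j ∈ s, p j * x j) = 0 := by
  simp only [mul_sub, sum_sub_distrib, ← sum_mul, hps, one_mul, sub_self]

theorem stmt_1_general (n : ℕ) (m M : ℝ) (x p : Fin n → ℝ)
    (hx : ∀ i, x i ∈ Set.Icc m M) (hp : ∀ i, 0 ≤ p i) (hps : ∑ i, p i = 1)
    (μ1 μ2 μ4 α β : ℝ)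
    (hμ1 : μ1 = ∑ i, p i * x i)
    (hμ2 : μ2 = ∑ i, p i * (x i - μ1) ^ 2)
    (hμ4 : μ4 = ∑ i, p i * (x i - μ1) ^ 4)
    (hα : α = 3 / 4 * (M - m) ^ 2 - 2 * (μ1 - m) * (M - μ1))
    (hβ : β = (μ1 - m) * (M - μ1) * (1 / 4 * (M - m) ^ 2 - (μ1 - m) * (M - μ1))) :
    μ4 ≤ α * μ2 + β := by
  set γ : ℝ := (M + m - 2 * μ1) * (M - m) ^ 2 / 4
  have hμ3 : ∑ i, p i * (x i - μ1) = 0 := hμ1 ▸ sum_mul_sub_weighted_mean _ p x hps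
  calc μ4 = ∑ i, p i * (x i - μ1) ^ 4 := hμ4
    _ ≤ ∑ i, p i * (α * (x i - μ1) ^ 2 + γ * (x i - μ1) + β) := by
        gcongr with i
        · exact hp i
        · rw [hα, hβ]; exact sub_pow_four_le_of_mem_Icc (hx i) μ1
    _ = α * μ2 + γ * ∑ i, p i * (x i - μ1) + β * ∑ i, p i := by
        simp only [hμ2, mul_sum, ← sum_add_distrib]
        exact sum_congr rfl fun i _ => by ring
    _ = α * μ2 + β := by rw [hμ3, hps]; ring

theorem stmt_1 (n : ℕ) (hn : 1 ≤ n) (m M : ℝ) (x p : Fin n → ℝ)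
    (hx : ∀ i, x i ∈ Set.Icc m M) (hp : ∀ i, 0 ≤ p i) (hps : ∑ i, p i = 1)
    (μ1 μ2 μ4 α β : ℝ)
    (hμ1 : μ1 = ∑ i, p i * x i)
    (hμ2 : μ2 = ∑ i, p i * (x i - μ1) ^ 2)
    (hμ4 : μ4 = ∑ i, p i * (x i - μ1) ^ 4)
    (hα : α = 3 / 4 * (M - m) ^ 2 - 2 * (μ1 - m) * (M - μ1))
    (hβ : β = (μ1 - m) * (M - μ1) * (1 / 4 * (M - m) ^ 2 - (μ1 - m) * (M - μ1))) :
    μ4 ≤ α * μ2 + β :=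
  stmt_1_general n m M x p hx hp hps μ1 μ2 μ4 α β hμ1 hμ2 hμ4 hα hβ
end

section
/- With μ₂, μ₄ the second and fourth central moments of a finite discrete distribution supported in [m,M], one has μ₂² ≤ (μ₄ + 3μ₂²)/4 ≤ (M−m)⁴/16. -/
/-!
The left inequality is Jensen's `μ₂² ≤ μ₄`. For the right one, symmetrise over an independent
copy: with weights `pᵢ pⱼ`, the mean of `(xᵢ - xⱼ)²` is `2μ₂` and the mean of `(xᵢ - xⱼ)⁴` is
`2μ₄ + 6μ₂²`. Since `|xᵢ - xⱼ| ≤ M - m`, this gives `μ₄ + 3μ₂² ≤ (M - m)² μ₂`, and Popoviciu's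
inequality `μ₂ ≤ (M - m)² / 4` finishes.
-/

open Finset

namespace WeightedMoments

variable {ι : Type*} [Fintype ι] {p x : ι → ℝ} {μ m M : ℝ}

lemma sum_mul_sub_eq_zero (hps : ∑ i, p i = 1) (hμ : μ = ∑ i, p i * x i) :
    ∑ i, p i * (x i - μ) = 0 := by
  simp only [mul_sub, sum_sub_distrib, ← sum_mul, hps, hμ]
  ring

lemma sq_sum_mul_le_sum_mul_sq (hp : ∀ i, 0 ≤ p i) (hps : ∑ i, p i = 1) (z : ι → ℝ) :
    (∑ i, p i * z i) ^ 2 ≤ ∑ i, p i * z i ^ 2 := by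
  calc (∑ i, p i * z i) ^ 2 ≤ (∑ i, p i) * ∑ i, p i * z i ^ 2 :=
        sum_sq_le_sum_mul_sum_of_sq_le_mul _ (fun i _ => hp i)
          (fun i _ => mul_nonneg (hp i) (sq_nonneg _)) (fun i _ => le_of_eq (by ring))
    _ = ∑ i, p i * z i ^ 2 := by rw [hps, one_mul]

lemma sum_mul_sub_sq_eq_add (hps : ∑ i, p i = 1) (hμ : ∑ i, p i * (x i - μ) = 0) (c : ℝ) :
    ∑ i, p i * (x i - c) ^ 2 = ∑ i, p i * (x i - μ) ^ 2 + (μ - c) ^ 2 := by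
  have hsplit : ∀ i, p i * (x i - c) ^ 2
      = p i * (x i - μ) ^ 2 + 2 * (μ - c) * (p i * (x i - μ)) + (μ - c) ^ 2 * p i := by
    intro i; ring
  simp only [hsplit, sum_add_distrib, ← mul_sum, hμ, hps]
  ring

lemma sum_mul_sub_sq_le_sq_div_four (hx : ∀ i, x i ∈ Set.Icc m M) (hp : ∀ i, 0 ≤ p i)
    (hps : ∑ i, p i = 1) (hμ : ∑ i, p i * (x i - μ) = 0) :
    ∑ i, p i * (x i - μ) ^ 2 ≤ (M - m) ^ 2 / 4 := by
  have hmid : ∑ i, p i * (x i - (m + M) / 2) ^ 2 ≤ (M - m) ^ 2 / 4 :=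
    calc ∑ i, p i * (x i - (m + M) / 2) ^ 2 ≤ ∑ i, p i * ((M - m) ^ 2 / 4) := by
          gcongr with i _
          · exact hp i
          · obtain ⟨h₁, h₂⟩ := hx i
            nlinarith
      _ = (M - m) ^ 2 / 4 := by rw [← sum_mul, hps, one_mul]
  rw [sum_mul_sub_sq_eq_add hps hμ] at hmid
  nlinarith [sq_nonneg (μ - (m + M) / 2)]

lemma sum_sum_mul_mul_sub_sq (hps : ∑ i, p i = 1) (hμ : ∑ i, p i * (x i - μ) = 0) :
    ∑ i, ∑ j, p i * p j * (x i - x j) ^ 2 = 2 * ∑ i, p i * (x i - μ) ^ 2 := by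
  have hexpand : ∀ i j, p i * p j * (x i - x j) ^ 2
      = p j * (p i * (x i - μ) ^ 2) - 2 * (p i * (x i - μ)) * (p j * (x j - μ))
        + p i * (p j * (x j - μ) ^ 2) := by
    intro i j; ring
  simp only [hexpand, sum_add_distrib, sum_sub_distrib, ← mul_sum, ← sum_mul, hμ, hps]
  ring

lemma sum_sum_mul_mul_sub_pow_four (hps : ∑ i, p i = 1) (hμ : ∑ i, p i * (x i - μ) = 0) :
    ∑ i, ∑ j, p i * p j * (x i - x j) ^ 4
      = 2 * ∑ i, p i * (x i - μ) ^ 4 + 6 * (∑ i, p i * (x i - μ) ^ 2) ^ 2 := by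
  have hexpand : ∀ i j, p i * p j * (x i - x j) ^ 4
      = p j * (p i * (x i - μ) ^ 4) - 4 * (p i * (x i - μ) ^ 3) * (p j * (x j - μ))
        + 6 * (p i * (x i - μ) ^ 2) * (p j * (x j - μ) ^ 2)
        - 4 * (p i * (x i - μ)) * (p j * (x j - μ) ^ 3) + p i * (p j * (x j - μ) ^ 4) := by
    intro i j; ring
  simp only [hexpand, sum_add_distrib, sum_sub_distrib, ← mul_sum, ← sum_mul, hμ, hps]
  ring

lemma sum_sum_mul_mul_sub_pow_four_le (hx : ∀ i, x i ∈ Set.Icc m M) (hp : ∀ i, 0 ≤ p i) :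
    ∑ i, ∑ j, p i * p j * (x i - x j) ^ 4
      ≤ (M - m) ^ 2 * ∑ i, ∑ j, p i * p j * (x i - x j) ^ 2 := by
  simp only [mul_sum]
  refine sum_le_sum fun i _ => sum_le_sum fun j _ => ?_
  have hdiff : (x i - x j) ^ 2 ≤ (M - m) ^ 2 := by
    obtain ⟨hi₁, hi₂⟩ := hx i
    obtain ⟨hj₁, hj₂⟩ := hx j
    exact sq_le_sq' (by linarith) (by linarith)
  have hpp : 0 ≤ p i * p j := mul_nonneg (hp i) (hp j)
  calc p i * p j * (x i - x j) ^ 4 = p i * p j * (x i - x j) ^ 2 * (x i - x j) ^ 2 := by ring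
    _ ≤ p i * p j * (x i - x j) ^ 2 * (M - m) ^ 2 := by gcongr
    _ = (M - m) ^ 2 * (p i * p j * (x i - x j) ^ 2) := by ring

lemma sum_mul_sub_pow_four_add_le (hx : ∀ i, x i ∈ Set.Icc m M) (hp : ∀ i, 0 ≤ p i)
    (hps : ∑ i, p i = 1) (hμ : ∑ i, p i * (x i - μ) = 0) :
    ∑ i, p i * (x i - μ) ^ 4 + 3 * (∑ i, p i * (x i - μ) ^ 2) ^ 2
      ≤ (M - m) ^ 2 * ∑ i, p i * (x i - μ) ^ 2 := by
  have h := sum_sum_mul_mul_sub_pow_four_le hx hp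
  rw [sum_sum_mul_mul_sub_pow_four hps hμ, sum_sum_mul_mul_sub_sq hps hμ] at h
  linarith

end WeightedMoments

open WeightedMoments in
theorem stmt_4 (n : ℕ) (m M : ℝ) (x p : Fin n → ℝ)
    (hx : ∀ i, x i ∈ Set.Icc m M) (hp : ∀ i, 0 ≤ p i) (hps : ∑ i, p i = 1)
    (μ1 μ2 μ4 : ℝ)
    (hμ1 : μ1 = ∑ i, p i * x i)
    (hμ2 : μ2 = ∑ i, p i * (x i - μ1) ^ 2)
    (hμ4 : μ4 = ∑ i, p i * (x i - μ1) ^ 4) :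
    μ2 ^ 2 ≤ (μ4 + 3 * μ2 ^ 2) / 4 ∧ (μ4 + 3 * μ2 ^ 2) / 4 ≤ (M - m) ^ 4 / 16 := by
  have hcen := sum_mul_sub_eq_zero hps hμ1
  have hjensen : μ2 ^ 2 ≤ μ4 := by
    have h := sq_sum_mul_le_sum_mul_sq hp hps fun i => (x i - μ1) ^ 2
    simp only [← pow_mul] at h
    rwa [hμ2, hμ4]
  have hsym : μ4 + 3 * μ2 ^ 2 ≤ (M - m) ^ 2 * μ2 := by
    simpa only [hμ2, hμ4] using sum_mul_sub_pow_four_add_le hx hp hps hcen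
  have hpop : μ2 ≤ (M - m) ^ 2 / 4 := hμ2 ▸ sum_mul_sub_sq_le_sq_div_four hx hp hps hcen
  refine ⟨by linarith, ?_⟩
  nlinarith [mul_le_mul_of_nonneg_left hpop (sq_nonneg (M - m))]
end

section
/- Let x_1,...,x_n be real numbers in [m,M] with n odd, mean x̄ = (1/n)∑x_i, m₂ = (1/n)∑(x_i−x̄)², m₄ = (1/n)∑(x_i−x̄)⁴. Then m₄ + 3m₂² ≤ ((n²−1)/(4n²))·(M−m)⁴. -/
/-!
Put `d i = x i - x̄`. Summing `(d i - d j)⁴ ≤ (M - m)² (d i - d j)²` over all pairs `(i, j)` and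
expanding, using `∑ d i = 0`, gives `2 n ∑ d⁴ + 6 (∑ d²)² ≤ 2 n (M - m)² ∑ d²`, that is
`m₄ + 3 m₂² ≤ (M - m)² m₂`.

It remains to bound `n² m₂ = n ∑ d² - (∑ d)²`. As a function of the point `d ∈ [m - x̄, M - x̄]ⁿ`
it is convex in each coordinate, so it is largest at a vertex of the box. At a vertex with
`k` coordinates at one end and `l` at the other it equals `k l (M - m)²`, and `4 k l ≤ n² - 1`
because `k + l = n` is odd, so `k ≠ l`.
-/

open Finset Function Set

theorem four_mul_mul_add_one_le_sq_of_odd {k l : ℕ} (h : Odd (k + l)) :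
    4 * k * l + 1 ≤ (k + l) ^ 2 := by
  have hkl : k ≠ l := by rintro rfl; exact Nat.not_odd_iff_even.2 (by simp) h
  rcases Nat.lt_or_gt_of_ne hkl with hlt | hlt
  · obtain ⟨t, rfl⟩ := Nat.exists_eq_add_of_lt hlt; ring_nf; nlinarith
  · obtain ⟨t, rfl⟩ := Nat.exists_eq_add_of_lt hlt; ring_nf; nlinarith

theorem convexOn_quadratic {c : ℝ} (hc : 0 ≤ c) (p q : ℝ) {s : Set ℝ} (hs : Convex ℝ s) :
    ConvexOn ℝ s fun t ↦ c * t ^ 2 + p * t + q := by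
  refine ⟨hs, fun u _ v _ α β hα hβ hαβ ↦ ?_⟩
  simp only [smul_eq_mul]
  obtain rfl : β = 1 - α := by linarith
  nlinarith [mul_nonneg (mul_nonneg hc hα) hβ, sq_nonneg (u - v)]

section

variable {ι : Type*} [Fintype ι]

theorem sum_comp_update [DecidableEq ι] (g : ℝ → ℝ) (y : ι → ℝ) (i : ι) (t : ℝ) :
    ∑ j, g (update y i t j) = g t + ∑ j ∈ univ \ {i}, g (y j) := by
  have h := sum_update_of_mem (mem_univ i) (g ∘ y) (g t)
  rwa [← comp_update] at h

theorem le_of_convexOn_update_of_le_on_vertices [DecidableEq ι] {a b C : ℝ} {f : (ι → ℝ) → ℝ}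
    (hf : ∀ y i, ConvexOn ℝ (Icc a b) fun t ↦ f (update y i t))
    (hC : ∀ y, (∀ i, y i = a ∨ y i = b) → f y ≤ C) {y : ι → ℝ} (hy : ∀ i, y i ∈ Icc a b) :
    f y ≤ C := by
  suffices ∀ s : Finset ι, ∀ y, (∀ i, y i ∈ Icc a b) → (∀ i ∉ s, y i = a ∨ y i = b) → f y ≤ C from
    this univ y hy (by simp)
  intro s
  induction s using Finset.induction_on with
  | empty => exact fun y _ hy' ↦ hC y fun i ↦ hy' i (Finset.notMem_empty i)
  | insert i s _ ih =>
    intro y hy hys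
    have hab : a ≤ b := (hy i).1.trans (hy i).2
    have hend : ∀ t, t = a ∨ t = b → f (update y i t) ≤ C := by
      intro t ht
      refine ih _ (fun j ↦ ?_) (fun j hj ↦ ?_)
      · rcases eq_or_ne j i with rfl | hji
        · rcases ht with rfl | rfl <;> simp [hab]
        · simpa [hji] using hy j
      · rcases eq_or_ne j i with rfl | hji
        · simpa using ht
        · simpa [hji] using hys j (by simp [hji, hj])
    calc f y = f (update y i (y i)) := by rw [update_eq_self]
      _ ≤ max (f (update y i a)) (f (update y i b)) :=
        (hf y i).le_max_of_mem_Icc (left_mem_Icc.2 hab) (right_mem_Icc.2 hab) (hy i)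
      _ ≤ C := max_le (hend a (.inl rfl)) (hend b (.inr rfl))

theorem sum_sum_sub_sq (d : ι → ℝ) :
    ∑ i, ∑ j, (d i - d j) ^ 2 = 2 * (Fintype.card ι * ∑ i, d i ^ 2 - (∑ i, d i) ^ 2) := by
  simp only [sub_sq, sum_add_distrib, sum_sub_distrib, sum_const, card_univ, nsmul_eq_mul,
    ← mul_sum, ← sum_mul]
  ring

theorem sum_sum_sub_pow_four (d : ι → ℝ) :
    ∑ i, ∑ j, (d i - d j) ^ 4 = 2 * Fintype.card ι * ∑ i, d i ^ 4
      - 8 * (∑ i, d i) * ∑ i, d i ^ 3 + 6 * (∑ i, d i ^ 2) ^ 2 := by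
  have e : ∀ u v : ℝ,
      (u - v) ^ 4 = u ^ 4 - 4 * u ^ 3 * v + 6 * u ^ 2 * v ^ 2 - 4 * u * v ^ 3 + v ^ 4 := by
    intros; ring
  simp only [e, sum_add_distrib, sum_sub_distrib, sum_const, card_univ, nsmul_eq_mul,
    ← mul_sum, ← sum_mul]
  ring

theorem card_mul_sum_sq_sub_sq_sum_le_of_odd (hodd : Odd (Fintype.card ι)) {a b : ℝ}
    {y : ι → ℝ} (hy : ∀ i, y i ∈ Icc a b) :
    Fintype.card ι * ∑ i, y i ^ 2 - (∑ i, y i) ^ 2 ≤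
      ((Fintype.card ι : ℝ) ^ 2 - 1) / 4 * (b - a) ^ 2 := by
  classical
  refine le_of_convexOn_update_of_le_on_vertices
    (f := fun z ↦ Fintype.card ι * ∑ i, z i ^ 2 - (∑ i, z i) ^ 2) (fun z i ↦ ?_) (fun z hz ↦ ?_) hy
  · have hn : (1 : ℝ) ≤ Fintype.card ι := by exact_mod_cast Fintype.card_pos_iff.2 ⟨i⟩
    simp only [sum_comp_update (· ^ 2), sum_update_of_mem (mem_univ i)]
    set R := ∑ j ∈ univ \ {i}, z j
    convert convexOn_quadratic (sub_nonneg.2 hn) (-2 * R)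
      (Fintype.card ι * ∑ j ∈ univ \ {i}, z j ^ 2 - R ^ 2) (convex_Icc a b) using 2
    ring
  · have hz' : z = fun i ↦ if z i = b then b else a := funext fun i ↦ by
      rcases hz i with h | h <;> simp [h]
    set k := #{i | z i = b}
    set l := #{i | ¬z i = b}
    have hkl : k + l = Fintype.card ι := card_filter_add_card_filter_not _
    have hsum : ∀ g : ℝ → ℝ, ∑ i, g (z i) = k * g b + l * g a := fun g ↦ by
      rw [hz']; simp only [apply_ite g, sum_ite, sum_const, nsmul_eq_mul]; rfl
    have hs1 : ∑ i, z i = k * b + l * a := hsum id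
    have hs2 : ∑ i, z i ^ 2 = k * b ^ 2 + l * a ^ 2 := hsum (· ^ 2)
    rw [hs1, hs2, ← hkl, Nat.cast_add]
    have hk : 4 * (k : ℝ) * l + 1 ≤ (k + l) ^ 2 := by
      exact_mod_cast four_mul_mul_add_one_le_sq_of_odd (hkl ▸ hodd)
    nlinarith [mul_le_mul_of_nonneg_right hk (sq_nonneg (b - a))]

theorem card_mul_sum_pow_four_add_three_mul_sq_le {d : ι → ℝ} (hd : ∑ i, d i = 0) {a b : ℝ}
    (hab : ∀ i, d i ∈ Icc a b) :
    Fintype.card ι * ∑ i, d i ^ 4 + 3 * (∑ i, d i ^ 2) ^ 2 ≤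
      (b - a) ^ 2 * (Fintype.card ι * ∑ i, d i ^ 2) := by
  have key : ∑ i, ∑ j, (d i - d j) ^ 4 ≤ (b - a) ^ 2 * ∑ i, ∑ j, (d i - d j) ^ 2 := by
    simp only [mul_sum]
    refine sum_le_sum fun i _ ↦ sum_le_sum fun j _ ↦ ?_
    have hij : (d i - d j) ^ 2 ≤ (b - a) ^ 2 := by
      apply sq_le_sq' <;> linarith [(hab i).1, (hab i).2, (hab j).1, (hab j).2]
    nlinarith [mul_le_mul_of_nonneg_right hij (sq_nonneg (d i - d j))]
  rw [sum_sum_sub_sq, sum_sum_sub_pow_four, hd] at key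
  linarith

theorem card_mul_sum_pow_four_add_three_mul_sq_le_of_odd (hodd : Odd (Fintype.card ι))
    {d : ι → ℝ} (hd : ∑ i, d i = 0) {a b : ℝ} (hab : ∀ i, d i ∈ Icc a b) :
    Fintype.card ι * ∑ i, d i ^ 4 + 3 * (∑ i, d i ^ 2) ^ 2 ≤
      ((Fintype.card ι : ℝ) ^ 2 - 1) / 4 * (b - a) ^ 4 := by
  have hvar := card_mul_sum_sq_sub_sq_sum_le_of_odd hodd hab
  rw [hd, zero_pow two_ne_zero, sub_zero] at hvar
  calc _ ≤ (b - a) ^ 2 * (Fintype.card ι * ∑ i, d i ^ 2) :=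
        card_mul_sum_pow_four_add_three_mul_sq_le hd hab
    _ ≤ (b - a) ^ 2 * (((Fintype.card ι : ℝ) ^ 2 - 1) / 4 * (b - a) ^ 2) := by gcongr
    _ = _ := by ring

end

theorem stmt_5_general (n : ℕ) (hodd : Odd n) (m M : ℝ) (x : Fin n → ℝ)
    (hx : ∀ i, x i ∈ Set.Icc m M)
    (xbar m2 m4 : ℝ)
    (hxbar : xbar = (1 / n) * ∑ i, x i)
    (hm2 : m2 = (1 / n) * ∑ i, (x i - xbar) ^ 2)
    (hm4 : m4 = (1 / n) * ∑ i, (x i - xbar) ^ 4) :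
    m4 + 3 * m2 ^ 2 ≤ ((n ^ 2 - 1 : ℝ) / (4 * n ^ 2)) * (M - m) ^ 4 := by
  have hn : (n : ℝ) ≠ 0 := by exact_mod_cast hodd.pos.ne'
  have hcentered : ∑ i, (x i - xbar) = 0 := by
    rw [sum_sub_distrib, sum_const, card_univ, Fintype.card_fin, nsmul_eq_mul, hxbar]
    field_simp
    ring
  have hbounds : ∀ i, x i - xbar ∈ Icc (m - xbar) (M - xbar) := fun i ↦
    ⟨sub_le_sub_right (hx i).1 _, sub_le_sub_right (hx i).2 _⟩
  have key := card_mul_sum_pow_four_add_three_mul_sq_le_of_odd (by simpa using hodd)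
    hcentered hbounds
  rw [Fintype.card_fin, sub_sub_sub_cancel_right] at key
  subst hm2 hm4
  field_simp
  linarith

theorem stmt_5 (n : ℕ) (hn : 0 < n) (hodd : Odd n) (m M : ℝ) (x : Fin n → ℝ)
    (hx : ∀ i, x i ∈ Set.Icc m M)
    (xbar m2 m4 : ℝ)
    (hxbar : xbar = (1 / n) * ∑ i, x i)
    (hm2 : m2 = (1 / n) * ∑ i, (x i - xbar) ^ 2)
    (hm4 : m4 = (1 / n) * ∑ i, (x i - xbar) ^ 4) :
    m4 + 3 * m2 ^ 2 ≤ ((n ^ 2 - 1 : ℝ) / (4 * n ^ 2)) * (M - m) ^ 4 :=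
  stmt_5_general n hodd m M x hx xbar m2 m4 hxbar hm2 hm4
end

section
/- For real numbers x_1,...,x_n in [m,M] with mean x̄ and fourth central moment m₄ = (1/n)∑(x_i−x̄)⁴, one has m₄ ≤ (x̄−m)(M−x̄)·((x̄−m)² + (M−x̄)² − (x̄−m)(M−x̄)). -/
/-!
On `[-a, b]` the convex function `y ↦ y ^ 4` lies below its chord `α + β y`, where
`α = a b (a² + b² - a b)`; indeed the gap factors as `(y + a) (b - y) q(y)` with `q` a quadratic of
discriminant `-3 (a + b)²`. Applying this to the centred data `xᵢ - x̄`, whose sum vanishes, and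
averaging kills the linear term and leaves `m₄ ≤ α` with `a = x̄ - m`, `b = M - x̄`.
-/

open Finset

theorem pow_four_le_chord_of_mem_Icc {a b y : ℝ} (hy : y ∈ Set.Icc (-a) b) :
    y ^ 4 ≤ a * b * (a ^ 2 + b ^ 2 - a * b) + (b - a) * (a ^ 2 + b ^ 2) * y := by
  have hfactor : a * b * (a ^ 2 + b ^ 2 - a * b) + (b - a) * (a ^ 2 + b ^ 2) * y - y ^ 4
      = (y + a) * (b - y) * (y ^ 2 + (b - a) * y + (a ^ 2 + b ^ 2 - a * b)) := by ring
  have hquad : 0 ≤ y ^ 2 + (b - a) * y + (a ^ 2 + b ^ 2 - a * b) := by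
    nlinarith [sq_nonneg (2 * y + b - a), sq_nonneg (a + b)]
  have hends : 0 ≤ (y + a) * (b - y) :=
    mul_nonneg (by linarith [hy.1]) (by linarith [hy.2])
  linarith [mul_nonneg hends hquad]

theorem sum_pow_four_le_of_sum_eq_zero {ι : Type*} (s : Finset ι) {a b : ℝ} {y : ι → ℝ}
    (hy : ∀ i ∈ s, y i ∈ Set.Icc (-a) b) (hsum : ∑ i ∈ s, y i = 0) :
    ∑ i ∈ s, y i ^ 4 ≤ #s * (a * b * (a ^ 2 + b ^ 2 - a * b)) := by
  calc ∑ i ∈ s, y i ^ 4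
      ≤ ∑ i ∈ s, (a * b * (a ^ 2 + b ^ 2 - a * b) + (b - a) * (a ^ 2 + b ^ 2) * y i) :=
        sum_le_sum fun i hi => pow_four_le_chord_of_mem_Icc (hy i hi)
    _ = #s * (a * b * (a ^ 2 + b ^ 2 - a * b)) + (b - a) * (a ^ 2 + b ^ 2) * ∑ i ∈ s, y i := by
        rw [sum_add_distrib, sum_const, nsmul_eq_mul, mul_sum]
    _ = #s * (a * b * (a ^ 2 + b ^ 2 - a * b)) := by rw [hsum, mul_zero, add_zero]

theorem stmt_6 (n : ℕ) (hn : 1 ≤ n) (m M : ℝ) (x : Fin n → ℝ)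
    (hx : ∀ i, x i ∈ Set.Icc m M)
    (xbar m4 : ℝ)
    (hxbar : xbar = (1 / n) * ∑ i, x i)
    (hm4 : m4 = (1 / n) * ∑ i, (x i - xbar) ^ 4) :
    m4 ≤ (xbar - m) * (M - xbar) *
      ((xbar - m) ^ 2 + (M - xbar) ^ 2 - (xbar - m) * (M - xbar)) := by
  have hn0 : (0 : ℝ) < n := by exact_mod_cast hn
  have hcentred : ∑ i, (x i - xbar) = 0 := by
    rw [sum_sub_distrib, sum_const, card_univ, Fintype.card_fin, nsmul_eq_mul, hxbar]
    field_simp [hn0.ne']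
    ring
  have hrange : ∀ i ∈ univ, x i - xbar ∈ Set.Icc (-(xbar - m)) (M - xbar) := fun i _ =>
    ⟨by linarith [(hx i).1], by linarith [(hx i).2]⟩
  have hbound := sum_pow_four_le_of_sum_eq_zero univ hrange hcentred
  rw [card_univ, Fintype.card_fin] at hbound
  rw [hm4, one_div, inv_mul_le_iff₀ hn0]
  exact hbound
end

section
/- For real numbers x_1,...,x_n in [m,M], the fourth central moment satisfies m₄ ≤ max_{1≤j≤n−1} [j(n−j)(n²−3nj+3j²)/n⁴] · (M−m)⁴. -/
/-!
The fourth central moment is a convex function of the sample (a sum of even powers of linear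
forms), so on the box `[m, M]ⁿ` it is maximised at a vertex, i.e. at a sample taking only the
values `m` and `M`. If `j` of the `n` entries equal `m`, the mean is `m + (n - j)(M - m)/n`, and
the moment works out to `j (n - j) ((n - j)³ + j³) / n⁵ · (M - m)⁴`, which is the stated
coefficient since `(n - j)³ + j³ = n (n² - 3nj + 3j²)`.
-/

open Finset

theorem ConvexOn.sum {𝕜 E β ι : Type*} [Semiring 𝕜] [PartialOrder 𝕜] [AddCommMonoid E]
    [AddCommMonoid β] [PartialOrder β] [IsOrderedAddMonoid β] [SMul 𝕜 E] [Module 𝕜 β]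
    {s : Set E} (hs : Convex 𝕜 s) {t : Finset ι} {f : ι → E → β}
    (hf : ∀ i ∈ t, ConvexOn 𝕜 s (f i)) : ConvexOn 𝕜 s (fun x => ∑ i ∈ t, f i x) := by
  have h := Finset.sum_induction f (ConvexOn 𝕜 s) (fun _ _ => ConvexOn.add)
    (convexOn_const 0 hs) hf
  simpa only [Finset.sum_fn] using h

noncomputable def fourthMomentCoeff (n j : ℝ) : ℝ :=
  j * (n - j) * (n ^ 2 - 3 * n * j + 3 * j ^ 2) / n ^ 4

section SampleMoments

variable {ι : Type*} [Fintype ι]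

noncomputable def sampleMean (x : ι → ℝ) : ℝ :=
  (1 / Fintype.card ι) * ∑ i, x i

noncomputable def sampleCentralMoment (k : ℕ) (x : ι → ℝ) : ℝ :=
  (1 / Fintype.card ι) * ∑ i, (x i - sampleMean x) ^ k

theorem convexOn_sampleCentralMoment {k : ℕ} (hk : Even k) :
    ConvexOn ℝ Set.univ (sampleCentralMoment k : (ι → ℝ) → ℝ) := by
  let deviation (i : ι) : (ι → ℝ) →ₗ[ℝ] ℝ :=
    LinearMap.proj i - (1 / (Fintype.card ι : ℝ)) • ∑ j, LinearMap.proj j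
  have hdeviation (i : ι) (x : ι → ℝ) : deviation i x = x i - sampleMean x := by
    simp [deviation, sampleMean]
  have hterm (i : ι) : ConvexOn ℝ Set.univ (fun x : ι → ℝ => (x i - sampleMean x) ^ k) := by
    simpa [Function.comp_def, hdeviation] using (hk.convexOn_pow.comp_linearMap (deviation i))
  exact (ConvexOn.sum convex_univ fun i _ => hterm i).smul (by positivity)

theorem exists_sampleCentralMoment_le_of_mem_Icc {k : ℕ} (hk : Even k) {m M : ℝ}
    {x : ι → ℝ} (hx : ∀ i, x i ∈ Set.Icc m M) :
    ∃ y : ι → ℝ, (∀ i, y i = m ∨ y i = M) ∧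
      sampleCentralMoment k x ≤ sampleCentralMoment k y := by
  have hhull : x ∈ convexHull ℝ (Set.univ.pi fun _ : ι => ({m, M} : Set ℝ)) :=
    mem_convexHull_pi fun i _ => by
      rw [convexHull_pair]
      exact Icc_subset_segment (hx i)
  obtain ⟨y, hy, hle⟩ :=
    (convexOn_sampleCentralMoment hk).exists_ge_of_mem_convexHull (Set.subset_univ _) hhull
  exact ⟨y, fun i => by simpa using hy i (Set.mem_univ i), hle⟩

theorem sum_comp_of_forall_eq_or_eq {a b : ℝ} {y : ι → ℝ}
    (hy : ∀ i, y i = a ∨ y i = b) (f : ℝ → ℝ) :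
    ∑ i, f (y i) = #{i | y i = a} * f a + (Fintype.card ι - #{i | y i = a}) * f b := by
  have hcard : (#{i | y i = a} : ℝ) + #{i | ¬y i = a} = Fintype.card ι := by
    exact_mod_cast card_filter_add_card_filter_not (s := univ) (fun i => y i = a)
  have hb : ∀ i ∈ ({i | ¬y i = a} : Finset ι), y i = b := fun i hi =>
    (hy i).resolve_left (mem_filter.mp hi).2
  rw [← sum_filter_add_sum_filter_not univ (fun i => y i = a),
    sum_congr rfl fun i hi => congrArg f (mem_filter.mp hi).2,
    sum_congr rfl fun i hi => congrArg f (hb i hi), sum_const, sum_const, nsmul_eq_mul,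
    nsmul_eq_mul, ← hcard]
  ring

theorem sampleCentralMoment_four_of_forall_eq_or_eq [Nonempty ι] {m M : ℝ} {y : ι → ℝ}
    (hy : ∀ i, y i = m ∨ y i = M) :
    sampleCentralMoment 4 y =
      fourthMomentCoeff (Fintype.card ι) #{i | y i = m} * (M - m) ^ 4 := by
  have hn : (Fintype.card ι : ℝ) ≠ 0 := by positivity
  rw [sampleCentralMoment, sum_comp_of_forall_eq_or_eq hy (fun t => (t - sampleMean y) ^ 4),
    sampleMean, sum_comp_of_forall_eq_or_eq hy (fun t => t), fourthMomentCoeff]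
  field_simp
  ring

end SampleMoments

theorem fourthMomentCoeff_nonneg {n j : ℝ} (hj : 0 ≤ j) (hjn : j ≤ n) :
    0 ≤ fourthMomentCoeff n j := by
  have hquad : 0 ≤ n ^ 2 - 3 * n * j + 3 * j ^ 2 := by
    nlinarith [sq_nonneg (2 * n - 3 * j), sq_nonneg j]
  exact div_nonneg (mul_nonneg (mul_nonneg hj (sub_nonneg.mpr hjn)) hquad) (by positivity)

theorem fourthMomentCoeff_le_sup' {n j : ℕ} (hjn : j ≤ n) (h : (Icc 1 (n - 1)).Nonempty) :
    fourthMomentCoeff n j ≤ (Icc 1 (n - 1)).sup' h (fun i : ℕ => fourthMomentCoeff n i) := by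
  have hn : 2 ≤ n := by
    obtain ⟨i, hi⟩ := h
    have := mem_Icc.mp hi
    omega
  by_cases hj : j = 0 ∨ j = n
  · have hzero : fourthMomentCoeff n j = 0 := by
      rcases hj with rfl | rfl <;> simp [fourthMomentCoeff]
    rw [hzero]
    exact le_sup'_of_le _ (mem_Icc.mpr ⟨le_rfl, by omega⟩)
      (fourthMomentCoeff_nonneg (by simp) (by exact_mod_cast (by omega : 1 ≤ n)))
  · exact le_sup' (fun i : ℕ => fourthMomentCoeff n i) (mem_Icc.mpr ⟨by omega, by omega⟩)

theorem stmt_7 (n : ℕ) (hn : 2 ≤ n) (m M : ℝ) (x : Fin n → ℝ)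
    (hx : ∀ i, x i ∈ Set.Icc m M)
    (xbar m4 : ℝ)
    (hxbar : xbar = (1 / n) * ∑ i, x i)
    (hm4 : m4 = (1 / n) * ∑ i, (x i - xbar) ^ 4) :
    m4 ≤ (Finset.Icc 1 (n - 1)).sup' (Finset.nonempty_Icc.mpr (by omega))
        (fun j : ℕ => (j : ℝ) * ((n : ℝ) - j) * ((n : ℝ) ^ 2 - 3 * n * j + 3 * (j : ℝ) ^ 2)
          / (n : ℝ) ^ 4) * (M - m) ^ 4 := by
  have : Nonempty (Fin n) := ⟨⟨0, by omega⟩⟩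
  obtain ⟨y, hy, hle⟩ := exists_sampleCentralMoment_le_of_mem_Icc (by decide : Even 4) hx
  have hm4' : m4 = sampleCentralMoment 4 x := by
    simp [hm4, hxbar, sampleCentralMoment, sampleMean]
  have hj : #{i | y i = m} ≤ n := by simpa using card_filter_le univ fun i => y i = m
  calc m4 ≤ sampleCentralMoment 4 y := hm4' ▸ hle
    _ = fourthMomentCoeff n #{i | y i = m} * (M - m) ^ 4 := by
      simpa using sampleCentralMoment_four_of_forall_eq_or_eq hy
    _ ≤ _ := by gcongr; exact fourthMomentCoeff_le_sup' hj _
end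

section
/- For a finite discrete distribution supported in [m,M] with second central moment μ₂ and fourth central moment μ₄, one has μ₂·μ₄ ≤ (4/3⁵)·(M−m)⁶. -/
/-!
The polynomial `g y = 3 (y - μ)⁴ + (M - m)² (y - μ)²` is convex, so on `[m, M]` it lies below its
chord; averaging (the Edmundson–Madansky inequality) bounds `3 μ₄ + (M - m)² μ₂` by the chord
evaluated at the mean `μ`, and that value is at most `(4/9) (M - m)⁴` whatever `μ ∈ [m, M]` is.
AM-GM, `12 (M - m)² μ₂ μ₄ ≤ ((M - m)² μ₂ + 3 μ₄)²`, then gives the claim.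
-/

open Set Finset

lemma convexOn_mul_sub_pow_four_add_mul_sub_sq (μ a b : ℝ) (ha : 0 ≤ a) (hb : 0 ≤ b) :
    ConvexOn ℝ univ fun y : ℝ => a * (y - μ) ^ 4 + b * (y - μ) ^ 2 := by
  have h4 := ((Even.convexOn_pow (𝕜 := ℝ) (by decide : Even 4)).translate_right (-μ)).smul ha
  have h2 := ((Even.convexOn_pow (𝕜 := ℝ) (by decide : Even 2)).translate_right (-μ)).smul hb
  refine (h4.add h2).congr fun y _ => ?_
  simp [sub_eq_neg_add]

lemma ConvexOn.mul_le_secant_of_mem_Icc {f : ℝ → ℝ} {a b y : ℝ} (hf : ConvexOn ℝ (Icc a b) f)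
    (hy : y ∈ Icc a b) : (b - a) * f y ≤ (b - y) * f a + (y - a) * f b := by
  obtain ⟨hay, hyb⟩ := hy
  rcases (hay.trans hyb).eq_or_lt with rfl | hab
  · obtain rfl : y = a := le_antisymm hyb hay
    simp
  have hba : 0 < b - a := sub_pos.2 hab
  have hconv := hf.2 (left_mem_Icc.2 hab.le) (right_mem_Icc.2 hab.le)
    (div_nonneg (sub_nonneg.2 hyb) hba.le) (div_nonneg (sub_nonneg.2 hay) hba.le)
    (by field_simp; ring)
  have hy : (b - y) / (b - a) * a + (y - a) / (b - a) * b = y := by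
    field_simp; ring
  simp only [smul_eq_mul, hy] at hconv
  calc (b - a) * f y ≤ (b - a) * ((b - y) / (b - a) * f a + (y - a) / (b - a) * f b) :=
        mul_le_mul_of_nonneg_left hconv hba.le
    _ = (b - y) * f a + (y - a) * f b := by field_simp

lemma ConvexOn.mul_sum_le_secant {ι : Type*} (s : Finset ι) {f : ℝ → ℝ} {a b : ℝ}
    (hf : ConvexOn ℝ (Icc a b) f) {x p : ι → ℝ} (hx : ∀ i ∈ s, x i ∈ Icc a b)
    (hp : ∀ i ∈ s, 0 ≤ p i) (hps : ∑ i ∈ s, p i = 1) :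
    (b - a) * ∑ i ∈ s, p i * f (x i) ≤
      (b - ∑ i ∈ s, p i * x i) * f a + (∑ i ∈ s, p i * x i - a) * f b := by
  calc (b - a) * ∑ i ∈ s, p i * f (x i) = ∑ i ∈ s, p i * ((b - a) * f (x i)) := by
        rw [mul_sum]; exact sum_congr rfl fun i _ => by ring
    _ ≤ ∑ i ∈ s, p i * ((b - x i) * f a + (x i - a) * f b) :=
        sum_le_sum fun i hi => mul_le_mul_of_nonneg_left
          (hf.mul_le_secant_of_mem_Icc (hx i hi)) (hp i hi)
    _ = (b * ∑ i ∈ s, p i - ∑ i ∈ s, p i * x i) * f a +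
          (∑ i ∈ s, p i * x i - a * ∑ i ∈ s, p i) * f b := by
        simp only [mul_sum, sum_mul, ← sum_sub_distrib, ← sum_add_distrib]
        exact sum_congr rfl fun i _ => by ring
    _ = _ := by rw [hps, mul_one, mul_one]

lemma secant_moment_poly_le (m μ M : ℝ) (hmM : m ≤ M) :
    (M - μ) * (3 * (m - μ) ^ 4 + (M - m) ^ 2 * (m - μ) ^ 2) +
      (μ - m) * (3 * (M - μ) ^ 4 + (M - m) ^ 2 * (M - μ) ^ 2) ≤ 4 / 9 * (M - m) ^ 5 := by
  rw [← sub_nonneg]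
  have key : 4 / 9 * (M - m) ^ 5 - ((M - μ) * (3 * (m - μ) ^ 4 + (M - m) ^ 2 * (m - μ) ^ 2) +
      (μ - m) * (3 * (M - μ) ^ 4 + (M - m) ^ 2 * (M - μ) ^ 2)) =
      (M - m) * (2 / 3 * (M - m) ^ 2 - 3 * ((μ - m) * (M - μ))) ^ 2 := by ring
  rw [key]
  exact mul_nonneg (sub_nonneg.2 hmM) (sq_nonneg _)

lemma mul_le_of_sq_mul_add_three_mul_le {L u v : ℝ} (hL : 0 < L) (hu : 0 ≤ u) (hv : 0 ≤ v)
    (h : L ^ 2 * u + 3 * v ≤ 4 / 9 * L ^ 4) : u * v ≤ 4 / 3 ^ 5 * L ^ 6 := by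
  refine le_of_mul_le_mul_left ?_ (by positivity : 0 < 12 * L ^ 2)
  calc 12 * L ^ 2 * (u * v) = 4 * (L ^ 2 * u) * (3 * v) := by ring
    _ ≤ (L ^ 2 * u + 3 * v) ^ 2 := four_mul_le_sq_add _ _
    _ ≤ (4 / 9 * L ^ 4) ^ 2 := pow_le_pow_left₀ (by positivity) h 2
    _ = 12 * L ^ 2 * (4 / 3 ^ 5 * L ^ 6) := by ring

theorem stmt_8 (n : ℕ) (m M : ℝ) (x p : Fin n → ℝ)
    (hx : ∀ i, x i ∈ Set.Icc m M) (hp : ∀ i, 0 ≤ p i) (hps : ∑ i, p i = 1)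
    (μ1 μ2 μ4 : ℝ)
    (hμ1 : μ1 = ∑ i, p i * x i)
    (hμ2 : μ2 = ∑ i, p i * (x i - μ1) ^ 2)
    (hμ4 : μ4 = ∑ i, p i * (x i - μ1) ^ 4) :
    μ2 * μ4 ≤ (4 / 3 ^ 5) * (M - m) ^ 6 := by
  have hμ : μ1 ∈ Icc m M :=
    hμ1 ▸ (convex_Icc m M).sum_mem (fun i _ => hp i) hps (fun i _ => hx i)
  have hmM : m ≤ M := hμ.1.trans hμ.2
  have hμ2_nonneg : 0 ≤ μ2 := hμ2 ▸ sum_nonneg fun i _ => mul_nonneg (hp i) (sq_nonneg _)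
  have hμ4_nonneg : 0 ≤ μ4 := hμ4 ▸ sum_nonneg fun i _ => mul_nonneg (hp i) (by positivity)
  rcases hmM.eq_or_lt with rfl | hlt
  · have hx_eq : ∀ i, x i = μ1 := fun i =>
      (le_antisymm (hx i).2 (hx i).1).trans (le_antisymm hμ.1 hμ.2)
    have : μ2 = 0 := hμ2 ▸ sum_eq_zero fun i _ => by simp [hx_eq i]
    simp [this]
  set L := M - m
  have hL_pos : 0 < L := sub_pos.2 hlt
  have hconvex := (convexOn_mul_sub_pow_four_add_mul_sub_sq μ1 3 (L ^ 2) (by norm_num)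
    (sq_nonneg L)).subset (subset_univ _) (convex_Icc m M)
  have hsecant := hconvex.mul_sum_le_secant univ (fun i _ => hx i) (fun i _ => hp i) hps
  rw [← hμ1] at hsecant
  have hmoments : L ^ 2 * μ2 + 3 * μ4 ≤ 4 / 9 * L ^ 4 := by
    refine le_of_mul_le_mul_left ?_ hL_pos
    calc L * (L ^ 2 * μ2 + 3 * μ4)
        = L * ∑ i, p i * (3 * (x i - μ1) ^ 4 + L ^ 2 * (x i - μ1) ^ 2) := by
          rw [hμ2, hμ4, mul_sum, mul_sum, ← sum_add_distrib]
          exact congrArg _ (sum_congr rfl fun i _ => by ring)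
      _ ≤ _ := hsecant
      _ ≤ 4 / 9 * L ^ 5 := secant_moment_poly_le m μ1 M hmM
      _ = L * (4 / 9 * L ^ 4) := by ring
  exact mul_le_of_sq_mul_add_three_mul_le hL_pos hμ2_nonneg hμ4_nonneg hmoments
end

section
/- For a finite discrete distribution with second, third and fourth central moments μ₂ > 0, μ₃, μ₄, one has μ₃² + μ₂³ ≤ μ₂·μ₄ (Pearson's inequality). -/
/-!
Write `y = x - μ₁'`. Since `∑ pᵢ yᵢ = 0`, the third moment is the covariance of `y` and `y² - μ₂`:
`μ₃ = ∑ pᵢ yᵢ (yᵢ² - μ₂)`, while `∑ pᵢ (yᵢ² - μ₂)² = μ₄ - μ₂²`. The weighted Cauchy–Schwarz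
inequality then gives `μ₃² ≤ μ₂ (μ₄ - μ₂²)`.
-/

open Finset

theorem Finset.sq_sum_mul_mul_le_sum_mul_sq_mul_sum_mul_sq {ι R : Type*}
    [CommRing R] [LinearOrder R] [IsStrictOrderedRing R]
    (s : Finset ι) {w : ι → R} (hw : ∀ i ∈ s, 0 ≤ w i) (f g : ι → R) :
    (∑ i ∈ s, w i * f i * g i) ^ 2 ≤ (∑ i ∈ s, w i * f i ^ 2) * ∑ i ∈ s, w i * g i ^ 2 :=
  sum_sq_le_sum_mul_sum_of_sq_le_mul s
    (fun i hi ↦ mul_nonneg (hw i hi) (sq_nonneg _))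
    (fun i hi ↦ mul_nonneg (hw i hi) (sq_nonneg _))
    (fun i _ ↦ le_of_eq (by ring))

theorem Finset.sum_mul_sub_sum_mul_eq_zero {ι : Type*} (s : Finset ι) {p : ι → ℝ}
    (hps : ∑ i ∈ s, p i = 1) (x : ι → ℝ) :
    ∑ i ∈ s, p i * (x i - ∑ j ∈ s, p j * x j) = 0 := by
  simp only [mul_sub, sum_sub_distrib, ← sum_mul, hps, one_mul, sub_self]

theorem pearson_inequality_of_sum_mul_eq_zero {ι : Type*} (s : Finset ι) {p y : ι → ℝ}
    (hp : ∀ i ∈ s, 0 ≤ p i) (hps : ∑ i ∈ s, p i = 1) (hy : ∑ i ∈ s, p i * y i = 0) :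
    (∑ i ∈ s, p i * y i ^ 3) ^ 2 + (∑ i ∈ s, p i * y i ^ 2) ^ 3 ≤
      (∑ i ∈ s, p i * y i ^ 2) * ∑ i ∈ s, p i * y i ^ 4 := by
  set m₂ := ∑ i ∈ s, p i * y i ^ 2
  have hm₃ : ∑ i ∈ s, p i * y i ^ 3 = ∑ i ∈ s, p i * y i * (y i ^ 2 - m₂) := by
    simp only [mul_sub, sum_sub_distrib, ← sum_mul, hy, zero_mul, sub_zero]
    exact sum_congr rfl fun i _ ↦ by ring
  have hm₄ : ∑ i ∈ s, p i * (y i ^ 2 - m₂) ^ 2 = ∑ i ∈ s, p i * y i ^ 4 - m₂ ^ 2 := by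
    have : ∀ i, p i * (y i ^ 2 - m₂) ^ 2 = p i * y i ^ 4 - 2 * m₂ * (p i * y i ^ 2) + m₂ ^ 2 * p i :=
      fun i ↦ by ring
    simp only [this, sum_add_distrib, sum_sub_distrib, ← mul_sum, hps]
    ring
  have hcs := sq_sum_mul_mul_le_sum_mul_sq_mul_sum_mul_sq s hp y (fun i ↦ y i ^ 2 - m₂)
  rw [← hm₃, hm₄] at hcs
  linarith

theorem stmt_9_general (n : ℕ) (x p : Fin n → ℝ)
    (hp : ∀ i, 0 ≤ p i) (hps : ∑ i, p i = 1)
    (μ1 μ2 μ3 μ4 : ℝ)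
    (hμ1 : μ1 = ∑ i, p i * x i)
    (hμ2 : μ2 = ∑ i, p i * (x i - μ1) ^ 2)
    (hμ3 : μ3 = ∑ i, p i * (x i - μ1) ^ 3)
    (hμ4 : μ4 = ∑ i, p i * (x i - μ1) ^ 4) :
    μ3 ^ 2 + μ2 ^ 3 ≤ μ2 * μ4 := by
  subst hμ2 hμ3 hμ4
  refine pearson_inequality_of_sum_mul_eq_zero univ (fun i _ ↦ hp i) hps ?_
  rw [hμ1]
  exact sum_mul_sub_sum_mul_eq_zero univ hps x

theorem stmt_9 (n : ℕ) (x p : Fin n → ℝ)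
    (hp : ∀ i, 0 ≤ p i) (hps : ∑ i, p i = 1)
    (μ1 μ2 μ3 μ4 : ℝ)
    (hμ1 : μ1 = ∑ i, p i * x i)
    (hμ2 : μ2 = ∑ i, p i * (x i - μ1) ^ 2)
    (hμ3 : μ3 = ∑ i, p i * (x i - μ1) ^ 3)
    (hμ4 : μ4 = ∑ i, p i * (x i - μ1) ^ 4)
    (hμ2pos : 0 < μ2) :
    μ3 ^ 2 + μ2 ^ 3 ≤ μ2 * μ4 :=
  stmt_9_general n x p hp hps μ1 μ2 μ3 μ4 hμ1 hμ2 hμ3 hμ4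
end

section
/- For a finite discrete distribution supported in [m,M] with central moments μ₂ > 0 and μ₃, one has μ₃² ≤ (M−m)²μ₂² − 4μ₂³ ≤ (M−m)⁶/108. -/
/-!
Centre the distribution: with `y = x - μ₁`, `a = m - μ₁ ≤ y ≤ b = M - μ₁` and `∑ p y = 0`.
Integrating `(y - a)(b - y) ≥ 0` against `p` and against `p y²` gives `μ₂ ≤ -ab` (Bhatia–Davis)
and `μ₄ ≤ (a + b) μ₃ - ab μ₂`, while Cauchy–Schwarz applied to `y` and `y² - μ₂` gives
`μ₃² ≤ μ₂ (μ₄ - μ₂²)`. Eliminating `μ₄` and `ab` yields the first inequality; the second is the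
maximum of `v ↦ d² v² - 4 v³` over `v ≥ 0`, attained at `v = d² / 6`.
-/

open Finset

variable {ι : Type*} [Fintype ι] {p w y : ι → ℝ} {a b : ℝ}

lemma sum_mul_sub_weightedMean_eq_zero (hps : ∑ i, p i = 1) (x : ι → ℝ) :
    ∑ i, p i * (x i - ∑ j, p j * x j) = 0 := by
  simp only [mul_sub, sum_sub_distrib, ← sum_mul, hps, one_mul, sub_self]

lemma sum_mul_sq_le_of_mem_Icc (hw : ∀ i, 0 ≤ w i) (hy : ∀ i, y i ∈ Set.Icc a b) :
    ∑ i, w i * y i ^ 2 ≤ (a + b) * ∑ i, w i * y i - a * b * ∑ i, w i := by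
  have h : 0 ≤ ∑ i, w i * ((y i - a) * (b - y i)) :=
    sum_nonneg fun i _ => mul_nonneg (hw i)
      (mul_nonneg (sub_nonneg.2 (hy i).1) (sub_nonneg.2 (hy i).2))
  have expand : ∑ i, w i * ((y i - a) * (b - y i))
      = (a + b) * ∑ i, w i * y i - a * b * ∑ i, w i - ∑ i, w i * y i ^ 2 := by
    simp only [mul_sum, ← sum_sub_distrib]
    exact sum_congr rfl fun i _ => by ring
  linarith

lemma sum_mul_pow_four_le (hp : ∀ i, 0 ≤ p i) (hy : ∀ i, y i ∈ Set.Icc a b) :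
    ∑ i, p i * y i ^ 4
      ≤ (a + b) * ∑ i, p i * y i ^ 3 - a * b * ∑ i, p i * y i ^ 2 := by
  have := sum_mul_sq_le_of_mem_Icc (w := fun i => p i * y i ^ 2)
    (fun i => mul_nonneg (hp i) (sq_nonneg _)) hy
  norm_num only [mul_assoc, ← pow_succ, ← pow_add] at this
  linarith

lemma sum_mul_sq_le_neg_mul (hp : ∀ i, 0 ≤ p i) (hps : ∑ i, p i = 1)
    (hmean : ∑ i, p i * y i = 0) (hy : ∀ i, y i ∈ Set.Icc a b) :
    ∑ i, p i * y i ^ 2 ≤ -(a * b) := by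
  have := sum_mul_sq_le_of_mem_Icc hp hy
  rw [hmean, hps] at this
  linarith

lemma sq_sum_mul_pow_three_le (hp : ∀ i, 0 ≤ p i) (hps : ∑ i, p i = 1)
    (hmean : ∑ i, p i * y i = 0) :
    (∑ i, p i * y i ^ 3) ^ 2
      ≤ (∑ i, p i * y i ^ 2) * (∑ i, p i * y i ^ 4 - (∑ i, p i * y i ^ 2) ^ 2) := by
  set μ₂ := ∑ i, p i * y i ^ 2 with hμ₂
  have cs := sum_sq_le_sum_mul_sum_of_sq_le_mul univ
    (r := fun i => p i * y i * (y i ^ 2 - μ₂)) (f := fun i => p i * y i ^ 2)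
    (g := fun i => p i * (y i ^ 2 - μ₂) ^ 2)
    (fun i _ => mul_nonneg (hp i) (sq_nonneg _)) (fun i _ => mul_nonneg (hp i) (sq_nonneg _))
    (fun i _ => le_of_eq (by ring))
  have hr : ∑ i, p i * y i * (y i ^ 2 - μ₂) = ∑ i, p i * y i ^ 3 - μ₂ * ∑ i, p i * y i := by
    simp only [mul_sum, ← sum_sub_distrib]
    exact sum_congr rfl fun i _ => by ring
  have hg : ∑ i, p i * (y i ^ 2 - μ₂) ^ 2
      = ∑ i, p i * y i ^ 4 - 2 * μ₂ * ∑ i, p i * y i ^ 2 + μ₂ ^ 2 * ∑ i, p i := by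
    simp only [mul_sum, ← sum_sub_distrib, ← sum_add_distrib]
    exact sum_congr rfl fun i _ => by ring
  rw [hr, hg, hmean, hps, ← hμ₂] at cs
  linarith

lemma sq_sum_mul_pow_three_le_of_mem_Icc (hp : ∀ i, 0 ≤ p i) (hps : ∑ i, p i = 1)
    (hmean : ∑ i, p i * y i = 0) (hy : ∀ i, y i ∈ Set.Icc a b) :
    (∑ i, p i * y i ^ 3) ^ 2
      ≤ (b - a) ^ 2 * (∑ i, p i * y i ^ 2) ^ 2 - 4 * (∑ i, p i * y i ^ 2) ^ 3 := by
  have hμ₂ : 0 ≤ ∑ i, p i * y i ^ 2 := sum_nonneg fun i _ => mul_nonneg (hp i) (sq_nonneg _)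
  have hab := sum_mul_sq_le_neg_mul hp hps hmean hy
  have h₄ := sum_mul_pow_four_le hp hy
  have cs := sq_sum_mul_pow_three_le hp hps hmean
  set μ₂ := ∑ i, p i * y i ^ 2
  set μ₃ := ∑ i, p i * y i ^ 3
  -- besides the three bounds, only AM-GM `2 (a + b) μ₂ μ₃ ≤ (a + b)² μ₂² + μ₃²` is needed
  nlinarith [mul_le_mul_of_nonneg_left h₄ hμ₂, sq_nonneg ((a + b) * μ₂ - μ₃),
    mul_nonneg (mul_nonneg hμ₂ hμ₂) (sub_nonneg.2 hab)]

lemma sq_mul_sq_sub_four_mul_cube_le {v : ℝ} (hv : 0 ≤ v) (d : ℝ) :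
    d ^ 2 * v ^ 2 - 4 * v ^ 3 ≤ d ^ 6 / 108 := by
  have factor : d ^ 6 / 108 - (d ^ 2 * v ^ 2 - 4 * v ^ 3)
      = 4 * (v - d ^ 2 / 6) ^ 2 * (v + d ^ 2 / 12) := by
    ring
  rw [← sub_nonneg, factor]
  exact mul_nonneg (by positivity) (add_nonneg hv (by positivity))

theorem stmt_11_general (n : ℕ) (m M : ℝ) (x p : Fin n → ℝ)
    (hx : ∀ i, x i ∈ Set.Icc m M) (hp : ∀ i, 0 ≤ p i) (hps : ∑ i, p i = 1)
    (μ1 μ2 μ3 : ℝ)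
    (hμ1 : μ1 = ∑ i, p i * x i)
    (hμ2 : μ2 = ∑ i, p i * (x i - μ1) ^ 2)
    (hμ3 : μ3 = ∑ i, p i * (x i - μ1) ^ 3) :
    μ3 ^ 2 ≤ (M - m) ^ 2 * μ2 ^ 2 - 4 * μ2 ^ 3 ∧
      (M - m) ^ 2 * μ2 ^ 2 - 4 * μ2 ^ 3 ≤ (M - m) ^ 6 / 108 := by
  have hmean : ∑ i, p i * (x i - μ1) = 0 := hμ1 ▸ sum_mul_sub_weightedMean_eq_zero hps x
  have hy : ∀ i, x i - μ1 ∈ Set.Icc (m - μ1) (M - μ1) := fun i =>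
    ⟨sub_le_sub_right (hx i).1 _, sub_le_sub_right (hx i).2 _⟩
  have hμ2_nonneg : 0 ≤ μ2 := hμ2 ▸ sum_nonneg fun i _ => mul_nonneg (hp i) (sq_nonneg _)
  refine ⟨?_, sq_mul_sq_sub_four_mul_cube_le hμ2_nonneg _⟩
  have := sq_sum_mul_pow_three_le_of_mem_Icc hp hps hmean hy
  rwa [← hμ2, ← hμ3, sub_sub_sub_cancel_right] at this

theorem stmt_11 (n : ℕ) (m M : ℝ) (x p : Fin n → ℝ)
    (hx : ∀ i, x i ∈ Set.Icc m M) (hp : ∀ i, 0 ≤ p i) (hps : ∑ i, p i = 1)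
    (μ1 μ2 μ3 : ℝ)
    (hμ1 : μ1 = ∑ i, p i * x i)
    (hμ2 : μ2 = ∑ i, p i * (x i - μ1) ^ 2)
    (hμ3 : μ3 = ∑ i, p i * (x i - μ1) ^ 3)
    (hμ2pos : 0 < μ2) :
    μ3 ^ 2 ≤ (M - m) ^ 2 * μ2 ^ 2 - 4 * μ2 ^ 3 ∧
      (M - m) ^ 2 * μ2 ^ 2 - 4 * μ2 ^ 3 ≤ (M - m) ^ 6 / 108 :=
  stmt_11_general n m M x p hx hp hps μ1 μ2 μ3 hμ1 hμ2 hμ3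
end

section
/- For a finite discrete distribution supported in [m,M] with mean μ₁' and third central moment μ₃, one has −(1/4)(μ₁'−m)³ ≤ μ₃ ≤ (1/4)(M−μ₁')³. -/
/-!
With `a = μ₁' - m`, every centred value `y = xᵢ - μ₁'` satisfies `y ≥ -a`, and on that range the
cubic lies above the line `(3/4) a² y - a³/4`. Averaging against the weights kills the linear term
(the centred values have mean zero) and leaves `μ₃ ≥ -a³/4`. The upper bound is the lower bound
for the reflected distribution `-xᵢ`, supported in `[-M, -m]`.
-/

open Finset

/-- The line is tangent to `y ↦ y³` at `y = a/2` and meets it again at `y = -a`: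
`y³ - ((3/4) a² y - a³/4) = (y + a) (y - a/2)²`. -/
lemma tangent_le_cube_of_neg_le {a y : ℝ} (h : -a ≤ y) :
    3 / 4 * a ^ 2 * y - a ^ 3 / 4 ≤ y ^ 3 := by
  nlinarith [mul_nonneg (neg_le_iff_add_nonneg.mp h) (sq_nonneg (y - a / 2))]

section WeightedSums

variable {ι : Type*} (s : Finset ι) (p x : ι → ℝ)

lemma sum_mul_sub_weightedMean (hps : ∑ i ∈ s, p i = 1) :
    ∑ i ∈ s, p i * (x i - ∑ j ∈ s, p j * x j) = 0 := by
  simp only [mul_sub, sum_sub_distrib, ← sum_mul, hps, one_mul, sub_self]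

lemma sum_mul_affine_of_centered (c d : ℝ) (hps : ∑ i ∈ s, p i = 1)
    (hx : ∑ i ∈ s, p i * x i = 0) :
    ∑ i ∈ s, p i * (c * x i - d) = -d := by
  have hsplit : ∑ i ∈ s, p i * (c * x i - d) = c * ∑ i ∈ s, p i * x i - d * ∑ i ∈ s, p i := by
    rw [mul_sum, mul_sum, ← sum_sub_distrib]
    exact sum_congr rfl fun i _ => by ring
  rw [hsplit, hx, hps]
  ring

lemma neg_quarter_mul_cube_le_thirdCentralMoment (m : ℝ) (hx : ∀ i ∈ s, m ≤ x i)
    (hp : ∀ i ∈ s, 0 ≤ p i) (hps : ∑ i ∈ s, p i = 1) :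
    -(1 / 4) * (∑ j ∈ s, p j * x j - m) ^ 3 ≤
      ∑ i ∈ s, p i * (x i - ∑ j ∈ s, p j * x j) ^ 3 := by
  set μ := ∑ j ∈ s, p j * x j
  calc -(1 / 4) * (μ - m) ^ 3
      = ∑ i ∈ s, p i * (3 / 4 * (μ - m) ^ 2 * (x i - μ) - (μ - m) ^ 3 / 4) := by
        rw [sum_mul_affine_of_centered s p _ _ _ hps (sum_mul_sub_weightedMean s p x hps)]
        ring
    _ ≤ ∑ i ∈ s, p i * (x i - μ) ^ 3 :=
        sum_le_sum fun i hi => mul_le_mul_of_nonneg_left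
          (tangent_le_cube_of_neg_le (by linarith [hx i hi])) (hp i hi)

lemma thirdCentralMoment_le_quarter_mul_cube (M : ℝ) (hx : ∀ i ∈ s, x i ≤ M)
    (hp : ∀ i ∈ s, 0 ≤ p i) (hps : ∑ i ∈ s, p i = 1) :
    ∑ i ∈ s, p i * (x i - ∑ j ∈ s, p j * x j) ^ 3 ≤
      1 / 4 * (M - ∑ j ∈ s, p j * x j) ^ 3 := by
  have h := neg_quarter_mul_cube_le_thirdCentralMoment s p (-x) (-M)
    (fun i hi => neg_le_neg (hx i hi)) hp hps
  simp only [Pi.neg_apply, mul_neg, sum_neg_distrib, sub_neg_eq_add, neg_add_eq_sub] at h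
  have hcube : ∀ i, (∑ j ∈ s, p j * x j - x i) ^ 3 = -(x i - ∑ j ∈ s, p j * x j) ^ 3 := by
    intro i; ring
  simp only [hcube, mul_neg, sum_neg_distrib] at h
  linarith

end WeightedSums

theorem stmt_13 (n : ℕ) (m M : ℝ) (x p : Fin n → ℝ)
    (hx : ∀ i, x i ∈ Set.Icc m M) (hp : ∀ i, 0 ≤ p i) (hps : ∑ i, p i = 1)
    (μ1 μ3 : ℝ)
    (hμ1 : μ1 = ∑ i, p i * x i)
    (hμ3 : μ3 = ∑ i, p i * (x i - μ1) ^ 3) :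
    -(1 / 4) * (μ1 - m) ^ 3 ≤ μ3 ∧ μ3 ≤ (1 / 4) * (M - μ1) ^ 3 := by
  subst hμ3 hμ1
  exact ⟨neg_quarter_mul_cube_le_thirdCentralMoment _ p x m (fun i _ => (hx i).1)
      (fun i _ => hp i) hps,
    thirdCentralMoment_le_quarter_mul_cube _ p x M (fun i _ => (hx i).2) (fun i _ => hp i) hps⟩
end

section
/- For a finite discrete distribution supported in [m,M] with 0 < m, one has μ₃ ≥ ((μ₂ − μ₁'²)/μ₁')·μ₂, where μ₁' is the mean, μ₂ and μ₃ the second and third central moments. -/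
/-! With `c = μ₁' + μ₂ / μ₁'`, a direct expansion in the central moments gives
`∑ pᵢ xᵢ (xᵢ - c)² = μ₃ - ((μ₂ - μ₁'²) / μ₁') μ₂`, and the left side is nonnegative
because the `xᵢ` are. -/

open Finset

namespace WeightedMoments

variable {ι : Type*} (s : Finset ι) (p x : ι → ℝ) (μ : ℝ)

theorem sum_mul_sub_mean_eq_zero (hp : ∑ i ∈ s, p i = 1) (hμ : ∑ i ∈ s, p i * x i = μ) :
    ∑ i ∈ s, p i * (x i - μ) = 0 := by
  simp only [mul_sub, sum_sub_distrib, ← sum_mul, hp, hμ, one_mul, sub_self]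

theorem sum_mul_mul_sub_sq_eq (hp : ∑ i ∈ s, p i = 1) (hμ : ∑ i ∈ s, p i * x i = μ)
    (hμ0 : μ ≠ 0) :
    ∑ i ∈ s, p i * x i * (x i - (μ + (∑ i ∈ s, p i * (x i - μ) ^ 2) / μ)) ^ 2 =
      ∑ i ∈ s, p i * (x i - μ) ^ 3 -
        ((∑ i ∈ s, p i * (x i - μ) ^ 2) - μ ^ 2) / μ * ∑ i ∈ s, p i * (x i - μ) ^ 2 := by
  set μ2 := ∑ i ∈ s, p i * (x i - μ) ^ 2
  set t := μ2 / μ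
  have expand : ∀ i, p i * x i * (x i - (μ + t)) ^ 2 =
      μ * t ^ 2 * p i + (t ^ 2 - 2 * μ * t) * (p i * (x i - μ)) +
        (μ - 2 * t) * (p i * (x i - μ) ^ 2) + p i * (x i - μ) ^ 3 := fun i => by ring
  rw [sum_congr rfl fun i _ => expand i]
  simp only [sum_add_distrib, ← mul_sum, hp, sum_mul_sub_mean_eq_zero s p x μ hp hμ]
  simp only [t]
  field_simp
  ring

theorem third_central_moment_ge (hp0 : ∀ i ∈ s, 0 ≤ p i) (hx0 : ∀ i ∈ s, 0 ≤ x i)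
    (hp : ∑ i ∈ s, p i = 1) (hμ : ∑ i ∈ s, p i * x i = μ) (hμ0 : μ ≠ 0) :
    ((∑ i ∈ s, p i * (x i - μ) ^ 2) - μ ^ 2) / μ * ∑ i ∈ s, p i * (x i - μ) ^ 2 ≤
      ∑ i ∈ s, p i * (x i - μ) ^ 3 := by
  rw [← sub_nonneg, ← sum_mul_mul_sub_sq_eq s p x μ hp hμ hμ0]
  exact sum_nonneg fun i hi => by have := hp0 i hi; have := hx0 i hi; positivity

end WeightedMoments

theorem stmt_14 (n : ℕ) (m M : ℝ) (hm : 0 < m) (x p : Fin n → ℝ)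
    (hx : ∀ i, x i ∈ Set.Icc m M) (hp : ∀ i, 0 ≤ p i) (hps : ∑ i, p i = 1)
    (μ1 μ2 μ3 : ℝ)
    (hμ1 : μ1 = ∑ i, p i * x i)
    (hμ2 : μ2 = ∑ i, p i * (x i - μ1) ^ 2)
    (hμ3 : μ3 = ∑ i, p i * (x i - μ1) ^ 3) :
    μ3 ≥ ((μ2 - μ1 ^ 2) / μ1) * μ2 := by
  have hμ1_pos : 0 < μ1 := calc
    0 < m := hm
    _ = ∑ i, p i * m := by rw [← sum_mul, hps, one_mul]
    _ ≤ μ1 := hμ1 ▸ sum_le_sum fun i _ => mul_le_mul_of_nonneg_left (hx i).1 (hp i)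
  subst hμ2 hμ3
  exact WeightedMoments.third_central_moment_ge univ p x μ1 (fun i _ => hp i)
    (fun i _ => hm.le.trans (hx i).1) hps hμ1.symm hμ1_pos.ne'
end

section
/- For real numbers x_1,...,x_n in [m,M] with n ≥ 2, mean x̄, m₂ = (1/n)∑(x_i−x̄)², m₄ = (1/n)∑(x_i−x̄)⁴ > 0, one has m₂⁴/m₄ ≤ ((n−1)³/(n²−3n+3))·(x̄−m)⁴. -/
/-!
With `d i = x i - x̄` and `a = x̄ - m` we have `𝔼 d = 0` and `-a ≤ d i`, hence `d i ≤ (n - 1) a`.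
Three moment inequalities follow: `m₂ ≤ (n - 1) a²` from `𝔼 (d + a) ((n - 1) a - d) ≥ 0`;
`m₂² ≤ a m₃ + a² m₂` from Cauchy–Schwarz with the weights `d i + a ≥ 0`; and
`((n - 1) a m₂ + (n - 2) m₃)² ≤ m₄ ((n - 1)² a² + (n - 2)² m₂)` from Cauchy–Schwarz for
`d i²` and `(n - 1) a + (n - 2) d i`. Eliminating `m₃` between the last two bounds `m₄` below by
a rational function of `m₂` and `a`, and the first inequality finishes the estimate.
-/

open Finset BigOperators

lemma sq_expect_mul_le_expect_mul_expect {ι : Type*} (s : Finset ι) {w f : ι → ℝ}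
    (hw : ∀ i ∈ s, 0 ≤ w i) :
    (𝔼 i ∈ s, w i * f i) ^ 2 ≤ (𝔼 i ∈ s, w i) * 𝔼 i ∈ s, w i * f i ^ 2 := by
  simp_rw [expect_eq_sum_div_card, div_pow, div_mul_div_comm, ← sq]
  gcongr
  exact sum_sq_le_sum_mul_sum_of_sq_le_mul s hw (fun i hi => mul_nonneg (hw i hi) (sq_nonneg _))
    fun i _ => (by ring : _ = _).le

section Deviations

variable {ι : Type*} [Fintype ι] [Nonempty ι] {d : ι → ℝ} {a : ℝ}

lemma le_card_sub_one_mul_of_expect_eq_zero (hd : 𝔼 i, d i = 0) (ha : ∀ i, -a ≤ d i) (i : ι) :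
    d i ≤ (Fintype.card ι - 1) * a := by
  have hsum : ∑ j, (d j + a) = Fintype.card ι * a := by
    rw [← Fintype.card_mul_expect, expect_add_distrib, hd, Fintype.expect_const, zero_add]
  have hi := single_le_sum (fun j _ => neg_le_iff_add_nonneg.1 (ha j)) (mem_univ i)
  linarith

lemma expect_sq_le_of_expect_eq_zero (hd : 𝔼 i, d i = 0) (ha : ∀ i, -a ≤ d i) :
    𝔼 i, d i ^ 2 ≤ (Fintype.card ι - 1) * a ^ 2 := by
  set N : ℝ := (Fintype.card ι : ℝ)
  have hprod : 0 ≤ 𝔼 i, (d i + a) * ((N - 1) * a - d i) :=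
    expect_nonneg fun i _ => mul_nonneg (neg_le_iff_add_nonneg.1 (ha i))
      (sub_nonneg.2 (le_card_sub_one_mul_of_expect_eq_zero hd ha i))
  have hexpand : 𝔼 i, (d i + a) * ((N - 1) * a - d i)
      = (N - 2) * a * 𝔼 i, d i - 𝔼 i, d i ^ 2 + (N - 1) * a ^ 2 := by
    simp_rw [mul_expect, ← expect_sub_distrib]
    rw [← Fintype.expect_const (ι := ι) ((N - 1) * a ^ 2), ← expect_add_distrib]
    exact expect_congr rfl fun i _ => by ring
  rw [hexpand, hd] at hprod
  linarith

lemma sq_expect_sq_le_of_expect_eq_zero (hd : 𝔼 i, d i = 0) (ha : ∀ i, -a ≤ d i) :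
    (𝔼 i, d i ^ 2) ^ 2 ≤ a * 𝔼 i, d i ^ 3 + a ^ 2 * 𝔼 i, d i ^ 2 := by
  have hcs := sq_expect_mul_le_expect_mul_expect univ (f := d)
    fun i _ => neg_le_iff_add_nonneg.1 (ha i)
  have h1 : 𝔼 i, (d i + a) * d i = 𝔼 i, d i ^ 2 + a * 𝔼 i, d i := by
    rw [mul_expect, ← expect_add_distrib]
    exact expect_congr rfl fun i _ => by ring
  have h2 : 𝔼 i, (d i + a) = a := by
    rw [expect_add_distrib, hd, Fintype.expect_const, zero_add]
  have h3 : 𝔼 i, (d i + a) * d i ^ 2 = 𝔼 i, d i ^ 3 + a * 𝔼 i, d i ^ 2 := by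
    rw [mul_expect, ← expect_add_distrib]
    exact expect_congr rfl fun i _ => by ring
  rw [h1, h2, h3, hd] at hcs
  linear_combination hcs

lemma sq_add_le_expect_pow_four_mul_of_expect_eq_zero (hd : 𝔼 i, d i = 0) (c b : ℝ) :
    (c * 𝔼 i, d i ^ 2 + b * 𝔼 i, d i ^ 3) ^ 2
      ≤ (𝔼 i, d i ^ 4) * (c ^ 2 + b ^ 2 * 𝔼 i, d i ^ 2) := by
  have hcs := expect_mul_sq_le_sq_mul_sq univ (fun i => d i ^ 2) (fun i => c + b * d i)
  have h1 : 𝔼 i, d i ^ 2 * (c + b * d i) = c * 𝔼 i, d i ^ 2 + b * 𝔼 i, d i ^ 3 := by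
    rw [mul_expect, mul_expect, ← expect_add_distrib]
    exact expect_congr rfl fun i _ => by ring
  have h2 : 𝔼 i, (c + b * d i) ^ 2 = c ^ 2 + 2 * c * b * 𝔼 i, d i + b ^ 2 * 𝔼 i, d i ^ 2 := by
    simp_rw [add_sq, mul_pow, expect_add_distrib, ← mul_expect, Fintype.expect_const]
    ring
  have h4 : 𝔼 i, (d i ^ 2) ^ 2 = 𝔼 i, d i ^ 4 := expect_congr rfl fun i _ => by ring
  rw [h1, h2, h4, hd] at hcs
  linear_combination hcs

end Deviations

lemma mul_sq_mul_le_of_le_mul_sq {N a m₂ : ℝ} (hN : 2 ≤ N) (hm₂ : 0 ≤ m₂)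
    (hm₂_le : m₂ ≤ (N - 1) * a ^ 2) :
    (N ^ 2 - 3 * N + 3) * m₂ ^ 2 * (((N - 1) * a) ^ 2 + (N - 2) ^ 2 * m₂)
      ≤ (N - 1) ^ 3 * a ^ 2 * ((N - 2) * m₂ + a ^ 2) ^ 2 := by
  -- the right side minus the left side is `((N - 1) a² - m₂)` times this form
  have hquad : 0 ≤ (N ^ 2 - 3 * N + 3) * (N - 2) ^ 2 * m₂ ^ 2
      + (N - 1) * (2 * (N - 1) ^ 2 - 2 * (N - 1) + 1) * m₂ * a ^ 2 + (N - 1) ^ 2 * a ^ 4 := by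
    have hQ : 0 < N ^ 2 - 3 * N + 3 := by nlinarith
    have hR : 0 < 2 * (N - 1) ^ 2 - 2 * (N - 1) + 1 := by nlinarith
    have hN1 : 0 ≤ N - 1 := by linarith
    positivity
  linear_combination mul_nonneg (sub_nonneg.2 hm₂_le) hquad

lemma pow_four_mul_le_of_moment_bounds {N a m₂ m₃ m₄ : ℝ} (hN : 2 ≤ N) (hm₂ : 0 ≤ m₂)
    (hm₂_le : m₂ ≤ (N - 1) * a ^ 2) (hm₃ : m₂ ^ 2 ≤ a * m₃ + a ^ 2 * m₂)
    (hm₄ : ((N - 1) * a * m₂ + (N - 2) * m₃) ^ 2 ≤ m₄ * (((N - 1) * a) ^ 2 + (N - 2) ^ 2 * m₂)) :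
    m₂ ^ 4 * (N ^ 2 - 3 * N + 3) ≤ (N - 1) ^ 3 * a ^ 4 * m₄ := by
  rcases eq_or_ne a 0 with rfl | ha
  · obtain rfl : m₂ = 0 := le_antisymm (by simpa using hm₂_le) hm₂
    simp
  have hK : 0 < ((N - 1) * a) ^ 2 + (N - 2) ^ 2 * m₂ := by
    have : (N - 1) * a ≠ 0 := mul_ne_zero (by linarith) ha
    positivity
  have hlower : m₂ * ((N - 2) * m₂ + a ^ 2) ≤ a * ((N - 1) * a * m₂ + (N - 2) * m₃) := by
    linear_combination mul_le_mul_of_nonneg_left hm₃ (by linarith : 0 ≤ N - 2)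
  have hlower_sq := pow_le_pow_left₀ (mul_nonneg hm₂ (by nlinarith)) hlower 2
  have hN1 : 0 ≤ N - 1 := by linarith
  refine le_of_mul_le_mul_right ?_ hK
  calc m₂ ^ 4 * (N ^ 2 - 3 * N + 3) * (((N - 1) * a) ^ 2 + (N - 2) ^ 2 * m₂)
      ≤ m₂ ^ 2 * ((N - 1) ^ 3 * a ^ 2 * ((N - 2) * m₂ + a ^ 2) ^ 2) := by
        linear_combination mul_le_mul_of_nonneg_left (mul_sq_mul_le_of_le_mul_sq hN hm₂ hm₂_le)
          (sq_nonneg m₂)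
    _ ≤ (N - 1) ^ 3 * a ^ 2 * (a * ((N - 1) * a * m₂ + (N - 2) * m₃)) ^ 2 := by
        linear_combination mul_le_mul_of_nonneg_left hlower_sq
          (mul_nonneg (pow_nonneg hN1 3) (sq_nonneg a))
    _ ≤ (N - 1) ^ 3 * a ^ 4 * m₄ * (((N - 1) * a) ^ 2 + (N - 2) ^ 2 * m₂) := by
        linear_combination mul_le_mul_of_nonneg_left hm₄
          (mul_nonneg (pow_nonneg hN1 3) (by positivity : (0 : ℝ) ≤ a ^ 4))

theorem stmt_15 (n : ℕ) (hn : 2 ≤ n) (m M : ℝ) (x : Fin n → ℝ)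
    (hx : ∀ i, x i ∈ Set.Icc m M)
    (xbar m2 m4 : ℝ)
    (hxbar : xbar = (1 / n) * ∑ i, x i)
    (hm2 : m2 = (1 / n) * ∑ i, (x i - xbar) ^ 2)
    (hm4 : m4 = (1 / n) * ∑ i, (x i - xbar) ^ 4)
    (hm4pos : 0 < m4) :
    m2 ^ 4 / m4 ≤ ((n - 1 : ℝ) ^ 3 / ((n : ℝ) ^ 2 - 3 * n + 3)) * (xbar - m) ^ 4 := by
  have hN : (2 : ℝ) ≤ n := by exact_mod_cast hn
  have : NeZero n := ⟨by omega⟩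
  have hmean : ∀ f : Fin n → ℝ, 1 / (n : ℝ) * ∑ i, f i = 𝔼 i, f i := fun f => by
    rw [Fintype.expect_eq_sum_div_card, Fintype.card_fin, one_div_mul_eq_div]
  have hd : 𝔼 i, (x i - xbar) = 0 := by
    rw [expect_sub_distrib, Fintype.expect_const, hxbar, hmean, sub_self]
  have ha : ∀ i, -(xbar - m) ≤ x i - xbar := fun i => by linarith [(hx i).1]
  have hQ : 0 < (n : ℝ) ^ 2 - 3 * n + 3 := by nlinarith
  rw [div_le_iff₀ hm4pos, div_mul_eq_mul_div, div_mul_eq_mul_div, le_div_iff₀ hQ, hm2, hm4,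
    hmean, hmean]
  have hm₂_le := expect_sq_le_of_expect_eq_zero hd ha
  rw [Fintype.card_fin] at hm₂_le
  exact pow_four_mul_le_of_moment_bounds hN (expect_nonneg fun i _ => sq_nonneg _) hm₂_le
    (sq_expect_sq_le_of_expect_eq_zero hd ha)
    (sq_add_le_expect_pow_four_mul_of_expect_eq_zero hd _ _)
end

section
/- For real numbers x_1,...,x_n (n ≥ 2, not all equal) with mean x̄, m₂ and m₄ the second and fourth central moments, m = min x_i and M = max x_i, one has m ≤ x̄ − ((n²−3n+3)/(n−1)³ · m₂⁴/m₄)^{1/4} and M ≥ x̄ + ((n²−3n+3)/(n−1)³ · m₂⁴/m₄)^{1/4}. -/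
/-!
Put `d i = x i - x̄`, so `∑ d i = 0`, and `D = M - x̄`; the bound on `m` is the same statement for
`-d`. With `N = n`, `S₂ = ∑ d i ^ 2`, `S₄ = ∑ d i ^ 4` it suffices that
`(N² - 3N + 3) S₂⁴ ≤ (N - 1)³ N³ D⁴ S₄`.
If `S₂ ≤ N D²` this follows from Cauchy–Schwarz `S₂² ≤ N S₄`. Otherwise `a = S₂ / (N D²)` satisfies
`1 < a ≤ N - 1`, and summing the quartic `(D - t)((2a - 1)D - t)(t + aD)² ≥ 0` (valid for `t ≤ D`)
over `t = d i` gives `S₄ ≥ N D⁴ (a³ - a² + a)`; the claim then reduces to the monotonicity of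
`t ↦ (t² - t + 1) / t³`. Equality: `N - 1` of the `d i` equal `D`, the last one `-(N - 1) D`.
-/

open Finset

section CenteredSums

variable {ι : Type*} [Fintype ι] {d : ι → ℝ} {D : ℝ}

lemma sum_le_card_mul_of_le_affine (hsum : ∑ i, d i = 0) {f : ι → ℝ} {c e : ℝ}
    (hf : ∀ i, f i ≤ c * d i + e) : ∑ i, f i ≤ Fintype.card ι * e := by
  calc ∑ i, f i ≤ ∑ i, (c * d i + e) := sum_le_sum fun i _ => hf i
    _ = Fintype.card ι * e := by simp [sum_add_distrib, ← mul_sum, hsum]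

lemma neg_card_sub_one_mul_le (hsum : ∑ i, d i = 0) (hD : ∀ i, d i ≤ D) (i : ι) :
    -((Fintype.card ι - 1) * D) ≤ d i := by
  have h : D - d i ≤ ∑ j, (D - d j) :=
    single_le_sum (f := fun j => D - d j) (fun j _ => sub_nonneg.2 (hD j)) (mem_univ i)
  simp only [sum_sub_distrib, hsum, sum_const, card_univ, nsmul_eq_mul] at h
  linarith

lemma nonneg_of_sum_eq_zero_of_forall_le [Nonempty ι] (hsum : ∑ i, d i = 0)
    (hD : ∀ i, d i ≤ D) : 0 ≤ D := by
  obtain ⟨i⟩ := ‹Nonempty ι›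
  have hN : (1 : ℝ) ≤ Fintype.card ι := by exact_mod_cast Fintype.card_pos
  nlinarith [neg_card_sub_one_mul_le hsum hD i, hD i]

lemma sum_sq_le_card_mul_card_sub_one_mul_sq (hsum : ∑ i, d i = 0) (hD : ∀ i, d i ≤ D) :
    ∑ i, d i ^ 2 ≤ Fintype.card ι * ((Fintype.card ι - 1) * D ^ 2) := by
  refine sum_le_card_mul_of_le_affine hsum (c := (2 - Fintype.card ι) * D) fun i => ?_
  have hlow := neg_le_iff_add_nonneg.1 (neg_card_sub_one_mul_le hsum hD i)
  nlinarith [mul_nonneg (sub_nonneg.2 (hD i)) hlow]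

lemma le_sum_pow_four_of_one_le (hsum : ∑ i, d i = 0) (hD : ∀ i, d i ≤ D) (hD0 : 0 ≤ D) {a : ℝ}
    (ha : 1 ≤ a) :
    (3 * a ^ 2 - 2 * a + 1) * D ^ 2 * ∑ i, d i ^ 2
      - Fintype.card ι * ((2 * a - 1) * a ^ 2 * D ^ 4) ≤ ∑ i, d i ^ 4 := by
  have h := sum_le_card_mul_of_le_affine hsum
    (f := fun i => (3 * a ^ 2 - 2 * a + 1) * D ^ 2 * d i ^ 2 - d i ^ 4)
    (c := -(2 * a * (a - 1) ^ 2 * D ^ 3)) (e := (2 * a - 1) * a ^ 2 * D ^ 4) fun i => by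
      -- `t⁴` minus the right-hand side is `(D - t)((2a - 1)D - t)(t + aD)²`
      have h₁ : 0 ≤ D - d i := sub_nonneg.2 (hD i)
      have h₂ : 0 ≤ (2 * a - 1) * D - d i := by nlinarith [hD i]
      nlinarith [mul_nonneg (mul_nonneg h₁ h₂) (sq_nonneg (d i + a * D))]
  simp only [sum_sub_distrib, ← mul_sum] at h
  linarith

/-- `(t² - t + 1) / t³` is decreasing in `t > 0`. -/
lemma sq_sub_add_one_mul_pow_four_le {s a : ℝ} (h₁ : 1 ≤ a) (h₂ : a ≤ s) :
    (s ^ 2 - s + 1) * a ^ 4 ≤ s ^ 3 * (a ^ 3 - a ^ 2 + a) := by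
  have ha : 0 ≤ a := by linarith
  have hsa := mul_nonneg (sub_nonneg.2 h₂) (sub_nonneg.2 h₁)
  have key : (s ^ 2 - s + 1) * a ^ 3 ≤ s ^ 3 * (a ^ 2 - a + 1) := by
    nlinarith [sq_nonneg (s - a), sq_nonneg (a - 1), sq_nonneg a, sq_nonneg s,
      mul_nonneg hsa (sub_nonneg.2 h₁), mul_nonneg hsa (sub_nonneg.2 h₂)]
  nlinarith [mul_le_mul_of_nonneg_right key ha]

lemma sum_sq_pow_four_le_of_sum_sq_le (hN : 2 ≤ Fintype.card ι)
    (hS : ∑ i, d i ^ 2 ≤ Fintype.card ι * D ^ 2) :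
    ((Fintype.card ι : ℝ) ^ 2 - 3 * Fintype.card ι + 3) * (∑ i, d i ^ 2) ^ 4 ≤
      ((Fintype.card ι : ℝ) - 1) ^ 3 * Fintype.card ι ^ 3 * D ^ 4 * ∑ i, d i ^ 4 := by
  have hN' : (2 : ℝ) ≤ Fintype.card ι := by exact_mod_cast hN
  have cauchy_schwarz : (∑ i, d i ^ 2) ^ 2 ≤ Fintype.card ι * ∑ i, d i ^ 4 := by
    have := sq_sum_le_card_mul_sum_sq (s := univ) (f := fun i => d i ^ 2)
    simp_rw [← pow_mul] at this
    simpa using this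
  set N : ℝ := (Fintype.card ι : ℝ)
  have hS₂ : 0 ≤ ∑ i, d i ^ 2 := by positivity
  have hS₄ : 0 ≤ ∑ i, d i ^ 4 := by positivity
  have hsq : (∑ i, d i ^ 2) ^ 2 ≤ N ^ 2 * D ^ 4 := by nlinarith
  have hconst : N ^ 2 - 3 * N + 3 ≤ (N - 1) ^ 3 := by nlinarith [sq_nonneg (N - 1)]
  have hN₁ : 0 ≤ N - 1 := by linarith
  calc (N ^ 2 - 3 * N + 3) * (∑ i, d i ^ 2) ^ 4
      ≤ (N - 1) ^ 3 * ((∑ i, d i ^ 2) ^ 2 * (∑ i, d i ^ 2) ^ 2) := by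
        rw [← pow_add]; gcongr
    _ ≤ (N - 1) ^ 3 * ((N * ∑ i, d i ^ 4) * (N ^ 2 * D ^ 4)) := by
        gcongr
    _ = (N - 1) ^ 3 * N ^ 3 * D ^ 4 * ∑ i, d i ^ 4 := by ring

lemma sum_sq_pow_four_le_of_lt_sum_sq (hsum : ∑ i, d i = 0) (hD : ∀ i, d i ≤ D)
    (hS : Fintype.card ι * D ^ 2 < ∑ i, d i ^ 2) :
    ((Fintype.card ι : ℝ) ^ 2 - 3 * Fintype.card ι + 3) * (∑ i, d i ^ 2) ^ 4 ≤
      ((Fintype.card ι : ℝ) - 1) ^ 3 * Fintype.card ι ^ 3 * D ^ 4 * ∑ i, d i ^ 4 := by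
  have hS₂ := sum_sq_le_card_mul_card_sub_one_mul_sq hsum hD
  have : Nonempty ι := by
    by_contra h
    simp [not_nonempty_iff.1 h] at hS
  have hD0 := nonneg_of_sum_eq_zero_of_forall_le hsum hD
  set N : ℝ := (Fintype.card ι : ℝ)
  have hND : 0 < N * D ^ 2 := by
    have : D ≠ 0 := by rintro rfl; simp at hS₂; linarith
    positivity
  set a := (∑ i, d i ^ 2) / (N * D ^ 2)
  have hS₂a : ∑ i, d i ^ 2 = a * (N * D ^ 2) := (div_mul_cancel₀ _ hND.ne').symm
  have ha₁ : 1 ≤ a := by rw [le_div_iff₀ hND]; linarith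
  have ha : a ≤ N - 1 := by rw [div_le_iff₀ hND]; linarith
  have hS₄ : N * D ^ 4 * (a ^ 3 - a ^ 2 + a) ≤ ∑ i, d i ^ 4 := by
    have := le_sum_pow_four_of_one_le hsum hD hD0 ha₁
    rw [hS₂a] at this
    linarith
  have hpoly := sq_sub_add_one_mul_pow_four_le ha₁ ha
  rw [hS₂a]
  calc (N ^ 2 - 3 * N + 3) * (a * (N * D ^ 2)) ^ 4
      = ((N - 1) ^ 2 - (N - 1) + 1) * a ^ 4 * (N ^ 4 * D ^ 8) := by ring
    _ ≤ (N - 1) ^ 3 * (a ^ 3 - a ^ 2 + a) * (N ^ 4 * D ^ 8) := by gcongr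
    _ = (N - 1) ^ 3 * N ^ 3 * D ^ 4 * (N * D ^ 4 * (a ^ 3 - a ^ 2 + a)) := by ring
    _ ≤ (N - 1) ^ 3 * N ^ 3 * D ^ 4 * ∑ i, d i ^ 4 := by
        have : 0 ≤ N - 1 := by linarith
        gcongr

theorem sum_sq_pow_four_le (hN : 2 ≤ Fintype.card ι) (hsum : ∑ i, d i = 0) (hD : ∀ i, d i ≤ D) :
    ((Fintype.card ι : ℝ) ^ 2 - 3 * Fintype.card ι + 3) * (∑ i, d i ^ 2) ^ 4 ≤
      ((Fintype.card ι : ℝ) - 1) ^ 3 * Fintype.card ι ^ 3 * D ^ 4 * ∑ i, d i ^ 4 :=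
  (le_or_gt _ _).elim (sum_sq_pow_four_le_of_sum_sq_le hN) (sum_sq_pow_four_le_of_lt_sum_sq hsum hD)

theorem moment_ratio_rpow_le (hN : 2 ≤ Fintype.card ι) (hsum : ∑ i, d i = 0)
    (hD : ∀ i, d i ≤ D) :
    (((Fintype.card ι : ℝ) ^ 2 - 3 * Fintype.card ι + 3) / ((Fintype.card ι : ℝ) - 1) ^ 3 *
      ((1 / Fintype.card ι * ∑ i, d i ^ 2) ^ 4 / (1 / Fintype.card ι * ∑ i, d i ^ 4)))
        ^ ((1 : ℝ) / 4) ≤ D := by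
  have : Nonempty ι := Fintype.card_pos_iff.1 (by omega)
  have hD0 := nonneg_of_sum_eq_zero_of_forall_le hsum hD
  have hbound := sum_sq_pow_four_le hN hsum hD
  have hN' : (2 : ℝ) ≤ Fintype.card ι := by exact_mod_cast hN
  set N : ℝ := (Fintype.card ι : ℝ)
  have hc : 0 < N ^ 2 - 3 * N + 3 := by nlinarith
  have hN₁ : 0 < N - 1 := by linarith
  have hS₄ : 0 ≤ ∑ i, d i ^ 4 := by positivity
  rw [show (1 : ℝ) / 4 = (4 : ℝ)⁻¹ by norm_num,
    Real.rpow_inv_le_iff_of_pos (by positivity) hD0 (by norm_num),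
    show (4 : ℝ) = (4 : ℕ) by norm_num, Real.rpow_natCast]
  rcases hS₄.eq_or_lt with hS₄ | hS₄
  · -- all `d i` vanish and the ratio is the junk value `0 / 0 = 0`
    simp only [one_div, ← hS₄, mul_zero, div_zero]
    positivity
  · rw [show (N ^ 2 - 3 * N + 3) / (N - 1) ^ 3 * ((1 / N * ∑ i, d i ^ 2) ^ 4 /
        (1 / N * ∑ i, d i ^ 4)) = (N ^ 2 - 3 * N + 3) * (∑ i, d i ^ 2) ^ 4 /
          ((N - 1) ^ 3 * N ^ 3 * ∑ i, d i ^ 4) by field_simp,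
      div_le_iff₀ (by positivity)]
    linarith

end CenteredSums

theorem stmt_16 (n : ℕ) (hn : 2 ≤ n) (x : Fin n → ℝ)
    (xbar m2 m4 : ℝ)
    (hxbar : xbar = (1 / n) * ∑ i, x i)
    (hm2 : m2 = (1 / n) * ∑ i, (x i - xbar) ^ 2)
    (hm4 : m4 = (1 / n) * ∑ i, (x i - xbar) ^ 4) :
    Finset.univ.inf' (Finset.univ_nonempty_iff.mpr (by exact Fin.pos_iff_nonempty.mp (by omega))) x ≤
        xbar - (((n : ℝ) ^ 2 - 3 * n + 3) / ((n : ℝ) - 1) ^ 3 * (m2 ^ 4 / m4)) ^ ((1 : ℝ) / 4) ∧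
      Finset.univ.sup' (Finset.univ_nonempty_iff.mpr (by exact Fin.pos_iff_nonempty.mp (by omega))) x ≥
        xbar + (((n : ℝ) ^ 2 - 3 * n + 3) / ((n : ℝ) - 1) ^ 3 * (m2 ^ 4 / m4)) ^ ((1 : ℝ) / 4) := by
  have hcard : 2 ≤ Fintype.card (Fin n) := by simpa using hn
  have hsum : ∑ i, (x i - xbar) = 0 := by
    have : (n : ℝ) ≠ 0 := by positivity
    rw [sum_sub_distrib, sum_const, card_univ, Fintype.card_fin, nsmul_eq_mul, hxbar]
    field_simp
    ring
  have hsum_neg : ∑ i, -(x i - xbar) = 0 := by rw [sum_neg_distrib, hsum, neg_zero]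
  have hne : (univ : Finset (Fin n)).Nonempty :=
    univ_nonempty_iff.2 (Fin.pos_iff_nonempty.1 (by omega))
  subst hm2 hm4
  constructor
  · have h := moment_ratio_rpow_le hcard hsum_neg (D := xbar - univ.inf' hne x)
      fun i => by linarith [inf'_le x (mem_univ i)]
    simp only [Fintype.card_fin, neg_sq, Even.neg_pow (by decide : Even 4)] at h
    linarith
  · have h := moment_ratio_rpow_le hcard hsum (D := univ.sup' hne x - xbar)
      fun i => by linarith [le_sup' x (mem_univ i)]
    simp only [Fintype.card_fin] at h
    linarith
end

section
/- Let f(x) = x^n + a₂x^{n−2} + a₃x^{n−3} + ... + a_n be a monic real polynomial of degree n ≥ 2 whose roots x_1,...,x_n are all real. Then the span spn(f) = max_i x_i − min_i x_i satisfies spn(f) ≥ (8·((a₂² − 2a₄)/n + 6a₂²/n²))^{1/4}. -/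
/-!
The roots sum to zero, so Newton's identities express the coefficients through power sums:
`∑ xᵢ² = -2a₂` and `∑ xᵢ⁴ = 2a₂² - 4a₄`; the radicand is `(4n ∑ xᵢ⁴ + 12 (∑ xᵢ²)²) / n²`.
For `xᵢ ∈ [m, M]` we have `xᵢ² ≤ (M + m) xᵢ - mM`, hence `∑ xᵢ² ≤ -n mM` and, squaring,
`∑ xᵢ⁴ ≤ (M + m)² ∑ xᵢ² + n (mM)²`. As `(M - m)² = (M + m)² - 4mM`, these combine to the bound
`n² (M - m)⁴`.
-/

open Polynomial Finset

section Symmetric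

variable {ι R : Type*} [Fintype ι] [CommRing R]

theorem coeff_prod_X_sub_C_card_sub (x : ι → R) {j : ℕ} (hj : j ≤ Fintype.card ι) :
    (∏ i, (X - C (x i))).coeff (Fintype.card ι - j) = (-1) ^ j * (univ.val.map x).esymm j := by
  have hcard : Multiset.card (univ.val.map x) = Fintype.card ι := by simp
  have h := Multiset.prod_X_sub_C_coeff (univ.val.map x) (k := Fintype.card ι - j) (by omega)
  rwa [Multiset.map_map, hcard, Nat.sub_sub_self hj] at h

theorem esymm_map_univ_zero (x : ι → R) : (univ.val.map x).esymm 0 = 1 := by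
  simp [Multiset.esymm]

theorem esymm_map_univ_one (x : ι → R) : (univ.val.map x).esymm 1 = ∑ i, x i := by
  simp [Multiset.esymm, Multiset.powersetCard_one]

theorem mul_esymm_eq_sum_pow (x : ι → R) (k : ℕ) :
    k * (univ.val.map x).esymm k = (-1) ^ (k + 1) *
      ∑ a ∈ antidiagonal k with a.1 < k, (-1) ^ a.1 * (univ.val.map x).esymm a.1 * ∑ i, x i ^ a.2 := by
  simpa only [map_mul, map_natCast, map_sum, map_pow, map_neg, map_one, MvPolynomial.psum,
    MvPolynomial.aeval_esymm_eq_multiset_esymm, MvPolynomial.aeval_X] using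
    congrArg (MvPolynomial.aeval x) (MvPolynomial.mul_esymm_eq_sum ι R k)

variable {x : ι → R}

theorem sum_sq_eq_of_sum_eq_zero (hsum : ∑ i, x i = 0) :
    ∑ i, x i ^ 2 = -2 * (univ.val.map x).esymm 2 := by
  have h := mul_esymm_eq_sum_pow x 2
  simp only [sum_filter, Nat.sum_antidiagonal_succ, Nat.antidiagonal_zero, sum_singleton] at h
  norm_num [esymm_map_univ_zero, esymm_map_univ_one, hsum] at h
  linear_combination h

theorem sum_pow_four_eq_of_sum_eq_zero (hsum : ∑ i, x i = 0) :
    ∑ i, x i ^ 4 = 2 * (univ.val.map x).esymm 2 ^ 2 - 4 * (univ.val.map x).esymm 4 := by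
  have h := mul_esymm_eq_sum_pow x 4
  simp only [sum_filter, Nat.sum_antidiagonal_succ, Nat.antidiagonal_zero, sum_singleton] at h
  norm_num [esymm_map_univ_zero, esymm_map_univ_one, hsum, sum_sq_eq_of_sum_eq_zero hsum] at h
  linear_combination h

end Symmetric

section Spread

variable {ι K : Type*} [Fintype ι] [CommRing K] [LinearOrder K] [IsStrictOrderedRing K]
  {x : ι → K} {m M : K}

theorem sq_le_of_mem_Icc {t : K} (ht : t ∈ Set.Icc m M) : t ^ 2 ≤ (M + m) * t - m * M := by
  nlinarith [mul_nonneg (sub_nonneg.2 ht.1) (sub_nonneg.2 ht.2)]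

theorem sum_sq_le_of_mem_Icc (hx : ∀ i, x i ∈ Set.Icc m M) (hsum : ∑ i, x i = 0) :
    ∑ i, x i ^ 2 ≤ Fintype.card ι * -(m * M) := by
  calc ∑ i, x i ^ 2 ≤ ∑ i, ((M + m) * x i - m * M) := sum_le_sum fun i _ => sq_le_of_mem_Icc (hx i)
    _ = Fintype.card ι * -(m * M) := by
      rw [sum_sub_distrib, ← mul_sum, hsum, sum_const, card_univ, nsmul_eq_mul]; ring

theorem sum_pow_four_le_of_mem_Icc (hx : ∀ i, x i ∈ Set.Icc m M) (hsum : ∑ i, x i = 0) :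
    ∑ i, x i ^ 4 ≤ (M + m) ^ 2 * ∑ i, x i ^ 2 + Fintype.card ι * (m * M) ^ 2 := by
  calc ∑ i, x i ^ 4 ≤ ∑ i, ((M + m) * x i - m * M) ^ 2 := by
        refine sum_le_sum fun i _ => ?_
        rw [show x i ^ 4 = (x i ^ 2) ^ 2 by ring]
        exact pow_le_pow_left₀ (sq_nonneg _) (sq_le_of_mem_Icc (hx i)) 2
    _ = (M + m) ^ 2 * ∑ i, x i ^ 2 - 2 * (M + m) * (m * M) * ∑ i, x i
          + Fintype.card ι * (m * M) ^ 2 := by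
      simp only [sub_sq, sum_add_distrib, sum_sub_distrib, mul_pow, mul_sum, sum_const, card_univ,
        nsmul_eq_mul]
      ring_nf
    _ = (M + m) ^ 2 * ∑ i, x i ^ 2 + Fintype.card ι * (m * M) ^ 2 := by rw [hsum]; ring

theorem sum_pow_four_add_sq_sum_sq_le_of_mem_Icc (hx : ∀ i, x i ∈ Set.Icc m M) (hsum : ∑ i, x i = 0) :
    4 * Fintype.card ι * ∑ i, x i ^ 4 + 12 * (∑ i, x i ^ 2) ^ 2
      ≤ (Fintype.card ι : K) ^ 2 * (M - m) ^ 4 := by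
  set N : K := (Fintype.card ι : K)
  set q := -(m * M)
  have hp2 : ∑ i, x i ^ 2 ≤ N * q := sum_sq_le_of_mem_Icc hx hsum
  have hp2_nonneg : 0 ≤ ∑ i, x i ^ 2 := sum_nonneg fun i _ => sq_nonneg _
  calc 4 * N * ∑ i, x i ^ 4 + 12 * (∑ i, x i ^ 2) ^ 2
      ≤ 4 * N * ((M + m) ^ 2 * ∑ i, x i ^ 2 + N * (m * M) ^ 2) + 12 * (∑ i, x i ^ 2) ^ 2 := by
        gcongr
        exact sum_pow_four_le_of_mem_Icc hx hsum
    _ ≤ 4 * N * ((M + m) ^ 2 * (N * q) + N * (m * M) ^ 2) + 12 * (N * q) ^ 2 := by gcongr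
    _ = N ^ 2 * ((M - m) ^ 4 - (M + m) ^ 2 * (M - m) ^ 2) := by ring
    _ ≤ N ^ 2 * (M - m) ^ 4 := by
        gcongr
        exact sub_le_self _ (by positivity)

end Spread

theorem stmt_19 (n : ℕ) (hn : 4 ≤ n) (f : Polynomial ℝ) (x : Fin n → ℝ)
    (hf : f = ∏ i, (X - C (x i)))
    (hcoeff : f.coeff (n - 1) = 0)
    (a2 a4 : ℝ) (ha2 : a2 = f.coeff (n - 2)) (ha4 : a4 = f.coeff (n - 4)) :
    Finset.univ.sup' (Finset.univ_nonempty_iff.mpr (Fin.pos_iff_nonempty.mp (by omega))) x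
      - Finset.univ.inf' (Finset.univ_nonempty_iff.mpr (Fin.pos_iff_nonempty.mp (by omega))) x
    ≥ (8 * ((a2 ^ 2 - 2 * a4) / n + 6 * a2 ^ 2 / (n : ℝ) ^ 2)) ^ ((1 : ℝ) / 4) := by
  set M := univ.sup' _ x
  set m := univ.inf' _ x
  have hvieta (j : ℕ) (hj : j ≤ n) : f.coeff (n - j) = (-1) ^ j * (univ.val.map x).esymm j := by
    simpa [hf] using coeff_prod_X_sub_C_card_sub x (j := j) (by simpa using hj)
  have hsum : ∑ i, x i = 0 := by
    have h1 := hvieta 1 (by omega)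
    rw [hcoeff, esymm_map_univ_one] at h1
    linear_combination h1
  have hp2 : ∑ i, x i ^ 2 = -2 * a2 := by
    rw [sum_sq_eq_of_sum_eq_zero hsum, ha2, hvieta 2 (by omega)]; ring
  have hp4 : ∑ i, x i ^ 4 = 2 * a2 ^ 2 - 4 * a4 := by
    rw [sum_pow_four_eq_of_sum_eq_zero hsum, ha2, ha4, hvieta 2 (by omega), hvieta 4 (by omega)]
    ring
  have hx : ∀ i, x i ∈ Set.Icc m M := fun i => ⟨inf'_le _ (mem_univ i), le_sup' _ (mem_univ i)⟩
  have hspan : 0 ≤ M - m := sub_nonneg.2 ((hx ⟨0, by omega⟩).1.trans (hx ⟨0, by omega⟩).2)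
  have hbound := sum_pow_four_add_sq_sum_sq_le_of_mem_Icc hx hsum
  rw [Fintype.card_fin] at hbound
  have hinner : 8 * ((a2 ^ 2 - 2 * a4) / n + 6 * a2 ^ 2 / (n : ℝ) ^ 2)
      = (4 * n * ∑ i, x i ^ 4 + 12 * (∑ i, x i ^ 2) ^ 2) / (n : ℝ) ^ 2 := by
    have hn0 : (n : ℝ) ≠ 0 := by positivity
    rw [hp2, hp4]; field_simp; ring
  rw [ge_iff_le, one_div, Real.rpow_inv_le_iff_of_pos (by rw [hinner]; positivity) hspan four_pos,
    hinner, div_le_iff₀ (by positivity), Real.rpow_ofNat, mul_comm ((M - m) ^ 4)]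
  exact hbound
end
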